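/- arXiv:2402.16730 — 4 statements merged into one kernel-verified Lean document; each statement's English description precedes it below -/
import Mathlib

section
/- If F is an intersecting family of k-element subsets of [n] with n ≥ 2k, then the sum over all unordered pairs {A,B} ⊆ F with A ≠ B of |A ∩ B| is at most C(C(n-1,k-1), 2) + (n-1)·C(C(n-2,k-2), 2). -/
set_option maxHeartbeats 1600000

open Finset

namespace Stmt0Aux

lemma two_mul_choose_two (a : ℕ) : 2 * a.choose 2 = a * (a - 1) := by
  rw [Nat.choose_two_right, Nat.mul_div_cancel']
  rcases a with _ | b
  · simp
  · simpa [Nat.succ_sub_one, mul_comm] using even_iff_two_dvd.mp (Nat.even_mul_succ_self b)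

lemma count_supersets {α : Type*} [DecidableEq α] {G t : Finset α} (h : t ⊆ G) {j : ℕ}
    (hj : t.card ≤ j) :
    ((Finset.powersetCard j G).filter (fun A => t ⊆ A)).card
      = Nat.choose (G.card - t.card) (j - t.card) := by
  rw [← Finset.card_sdiff_of_subset h, ← Finset.card_powersetCard (j - t.card) (G \ t)]
  apply Finset.card_bij' (fun A _ => A \ t) (fun B _ => B ∪ t)
  · intro A hA
    rw [Finset.mem_filter, Finset.mem_powersetCard] at hA
    obtain ⟨⟨hAG, hAcard⟩, htA⟩ := hA
    rw [Finset.mem_powersetCard]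
    refine ⟨Finset.sdiff_subset_sdiff hAG Finset.Subset.rfl, ?_⟩
    rw [Finset.card_sdiff_of_subset htA, hAcard]
  · intro B hB
    rw [Finset.mem_powersetCard] at hB
    obtain ⟨hBG, hBcard⟩ := hB
    have hdisj : Disjoint B t := Finset.disjoint_of_subset_left hBG (Finset.sdiff_disjoint)
    rw [Finset.mem_filter, Finset.mem_powersetCard]
    refine ⟨⟨Finset.union_subset (hBG.trans (Finset.sdiff_subset)) h, ?_⟩,
      Finset.subset_union_right⟩
    rw [Finset.card_union_of_disjoint hdisj, hBcard]
    omega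
  · intro A hA
    rw [Finset.mem_filter] at hA
    exact Finset.sdiff_union_of_subset hA.2
  · intro B hB
    rw [Finset.mem_powersetCard] at hB
    have hdisj : Disjoint B t := Finset.disjoint_of_subset_left hB.1 (Finset.sdiff_disjoint)
    ext a
    simp only [Finset.mem_sdiff, Finset.mem_union]
    constructor
    · rintro ⟨h1 | h1, h2⟩
      · exact h1
      · exact absurd h1 h2
    · intro ha
      exact ⟨Or.inl ha, fun hat => (Finset.disjoint_left.mp hdisj ha) hat⟩

end Stmt0Aux

namespace Stmt0Aux3

/-- Transfer of the Erdős–Ko–Rado theorem to families of subsets of `Icc 1 n`. -/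
lemma ekr_nat (n k : ℕ) (hk : 1 ≤ k) (hn : 2 * k ≤ n)
    (F : Finset (Finset ℕ))
    (hmem : ∀ A ∈ F, A ⊆ Finset.Icc 1 n ∧ A.card = k)
    (hint : ∀ A ∈ F, ∀ B ∈ F, (A ∩ B).Nonempty) :
    F.card ≤ (n - 1).choose (k - 1) := by
  classical
  have hn0 : 0 < n := by omega
  -- the map to Fin n
  set Φ : Finset ℕ → Finset (Fin n) :=
    fun A => (Finset.univ : Finset (Fin n)).filter (fun i => (i : ℕ) + 1 ∈ A) with hΦ
  have hmemΦ : ∀ (A : Finset ℕ) (i : Fin n), i ∈ Φ A ↔ (i : ℕ) + 1 ∈ A := by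
    intro A i; simp [hΦ]
  -- card preservation
  have hcard : ∀ A : Finset ℕ, A ⊆ Finset.Icc 1 n → (Φ A).card = A.card := by
    intro A hA
    apply Finset.card_bij (fun (i : Fin n) (_ : i ∈ Φ A) => (i : ℕ) + 1)
    · intro i hi
      exact (hmemΦ A i).mp hi
    · intro i hi j hj hij
      exact Fin.ext (by omega)
    · intro x hx
      have hxI : x ∈ Finset.Icc 1 n := hA hx
      rw [Finset.mem_Icc] at hxI
      refine ⟨⟨x - 1, by omega⟩, ?_, by simp; omega⟩
      rw [hmemΦ]
      simpa [Nat.sub_add_cancel hxI.1] using hx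
  -- injectivity on F
  have hinj : Set.InjOn Φ F := by
    intro A hA B hB hAB
    ext x
    constructor
    · intro hx
      have hxI := (hmem A hA).1 hx
      rw [Finset.mem_Icc] at hxI
      have : (⟨x - 1, by omega⟩ : Fin n) ∈ Φ A := by
        rw [hmemΦ]; simpa [Nat.sub_add_cancel hxI.1] using hx
      rw [hAB, hmemΦ] at this
      simpa [Nat.sub_add_cancel hxI.1] using this
    · intro hx
      have hxI := (hmem B hB).1 hx
      rw [Finset.mem_Icc] at hxI
      have : (⟨x - 1, by omega⟩ : Fin n) ∈ Φ B := by
        rw [hmemΦ]; simpa [Nat.sub_add_cancel hxI.1] using hx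
      rw [← hAB, hmemΦ] at this
      simpa [Nat.sub_add_cancel hxI.1] using this
  have hcardF : (F.image Φ).card = F.card := Finset.card_image_of_injOn hinj
  have hsized : ((F.image Φ : Finset (Finset (Fin n))) : Set (Finset (Fin n))).Sized k := by
    intro A' hA'
    simp only [Finset.coe_image, Set.mem_image, Finset.mem_coe] at hA'
    obtain ⟨A, hA, rfl⟩ := hA'
    rw [hcard A (hmem A hA).1]
    exact (hmem A hA).2
  have hints : ((F.image Φ : Finset (Finset (Fin n))) : Set (Finset (Fin n))).Intersecting := by
    intro A' hA' B' hB'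
    simp only [Finset.coe_image, Set.mem_image, Finset.mem_coe] at hA' hB'
    obtain ⟨A, hA, rfl⟩ := hA'
    obtain ⟨B, hB, rfl⟩ := hB'
    obtain ⟨x, hx⟩ := hint A hA B hB
    rw [Finset.mem_inter] at hx
    have hxI := (hmem A hA).1 hx.1
    rw [Finset.mem_Icc] at hxI
    rw [Finset.disjoint_left]
    push_neg
    refine ⟨⟨x - 1, by omega⟩, ?_, ?_⟩
    · rw [hmemΦ]; simpa [Nat.sub_add_cancel hxI.1] using hx.1
    · rw [hmemΦ]; simpa [Nat.sub_add_cancel hxI.1] using hx.2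
  have hhalf : k ≤ n / 2 := by omega
  have := Finset.erdos_ko_rado hints hsized hhalf
  rwa [hcardF] at this

end Stmt0Aux3


namespace Stmt0Aux2

/-- Swap a double sum over a family of subsets of `G`. -/
lemma swap_sum {R : Type*} [NonAssocSemiring R] (H : Finset (Finset ℕ)) (G : Finset ℕ)
    (h : ∀ A ∈ H, A ⊆ G) (f : ℕ → R) :
    ∑ A ∈ H, ∑ x ∈ A, f x
      = ∑ x ∈ G, ((H.filter (fun A => x ∈ A)).card : R) * f x := by
  have step1 : ∀ A ∈ H, ∑ x ∈ A, f x = ∑ x ∈ G, if x ∈ A then f x else 0 := by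
    intro A hA
    rw [Finset.sum_ite_mem, Finset.inter_eq_right.mpr (h A hA)]
  calc ∑ A ∈ H, ∑ x ∈ A, f x = ∑ A ∈ H, ∑ x ∈ G, if x ∈ A then f x else 0 :=
        Finset.sum_congr rfl step1
    _ = ∑ x ∈ G, ∑ A ∈ H, if x ∈ A then f x else 0 := Finset.sum_comm
    _ = ∑ x ∈ G, ((H.filter (fun A => x ∈ A)).card : R) * f x := by
        refine Finset.sum_congr rfl fun x _ => ?_
        have hsummand : ∀ A : Finset ℕ, (if x ∈ A then f x else 0)
            = (if x ∈ A then (1 : R) else 0) * f x := by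
          intro A; split <;> simp
        rw [Finset.sum_congr rfl (fun A _ => hsummand A), ← Finset.sum_mul, Finset.sum_boole]

/-- Double version: sum of products over pairs of elements. -/
lemma swap_sum2 {R : Type*} [CommRing R] (H : Finset (Finset ℕ)) (G : Finset ℕ)
    (h : ∀ A ∈ H, A ⊆ G) (f : ℕ → R) :
    ∑ A ∈ H, (∑ x ∈ A, f x) * (∑ y ∈ A, f y)
      = ∑ x ∈ G, ∑ y ∈ G,
          ((H.filter (fun A => x ∈ A ∧ y ∈ A)).card : R) * (f x * f y) := by
  have step1 : ∀ A ∈ H, (∑ x ∈ A, f x) * (∑ y ∈ A, f y)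
      = ∑ x ∈ G, ∑ y ∈ G, if x ∈ A ∧ y ∈ A then f x * f y else 0 := by
    intro A hA
    rw [Finset.sum_mul_sum]
    have hx : ∑ x ∈ A, ∑ y ∈ A, f x * f y
        = ∑ x ∈ G, if x ∈ A then (∑ y ∈ A, f x * f y) else 0 := by
      rw [Finset.sum_ite_mem, Finset.inter_eq_right.mpr (h A hA)]
    rw [hx]
    refine Finset.sum_congr rfl fun x _ => ?_
    by_cases hxA : x ∈ A
    · simp only [hxA, if_true, true_and]
      rw [Finset.sum_ite_mem, Finset.inter_eq_right.mpr (h A hA)]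
    · simp [hxA]
  calc ∑ A ∈ H, (∑ x ∈ A, f x) * (∑ y ∈ A, f y)
      = ∑ A ∈ H, ∑ x ∈ G, ∑ y ∈ G, if x ∈ A ∧ y ∈ A then f x * f y else 0 :=
        Finset.sum_congr rfl step1
    _ = ∑ x ∈ G, ∑ y ∈ G, ∑ A ∈ H, if x ∈ A ∧ y ∈ A then f x * f y else 0 := by
        rw [Finset.sum_comm]
        refine Finset.sum_congr rfl fun x _ => Finset.sum_comm
    _ = _ := by
        refine Finset.sum_congr rfl fun x _ => Finset.sum_congr rfl fun y _ => ?_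
        have hsummand : ∀ A : Finset ℕ, (if x ∈ A ∧ y ∈ A then f x * f y else 0)
            = (if x ∈ A ∧ y ∈ A then (1 : R) else 0) * (f x * f y) := by
          intro A; split <;> simp
        rw [Finset.sum_congr rfl (fun A _ => hsummand A), ← Finset.sum_mul, Finset.sum_boole]

end Stmt0Aux2


theorem stmt0' (n k : ℕ) (hk : 1 ≤ k) (hn : 2 * k ≤ n)
    (F : Finset (Finset ℕ))
    (hmem : ∀ A ∈ F, A ⊆ Finset.Icc 1 n ∧ A.card = k)
    (hint : ∀ A ∈ F, ∀ B ∈ F, (A ∩ B).Nonempty) :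
    ∑ p ∈ F.offDiag, (p.1 ∩ p.2).card ≤
      2 * (Nat.choose (Nat.choose (n - 1) (k - 1)) 2 +
        (n - 1) * Nat.choose (Nat.choose (n - 2) (k - 2)) 2) := by
  classical
  rcases eq_or_lt_of_le hk with hk1 | hk2
  · -- k = 1 : the family has at most one element, so the off-diagonal is empty
    have hoff : F.offDiag = ∅ := by
      rw [Finset.eq_empty_iff_forall_notMem]
      rintro ⟨A, B⟩ hp
      rw [Finset.mem_offDiag] at hp
      obtain ⟨hA, hB, hAB⟩ := hp
      obtain ⟨x, hx⟩ := hint A hA B hB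
      rw [Finset.mem_inter] at hx
      have hA1 : A = {x} := by
        have := (hmem A hA).2
        rw [← hk1] at this
        obtain ⟨a, ha⟩ := Finset.card_eq_one.mp this
        rw [ha] at hx ⊢
        rw [Finset.mem_singleton] at hx
        rw [hx.1]
      have hB1 : B = {x} := by
        have := (hmem B hB).2
        rw [← hk1] at this
        obtain ⟨a, ha⟩ := Finset.card_eq_one.mp this
        rw [ha] at hx ⊢
        rw [Finset.mem_singleton] at hx
        rw [hx.2]
      exact hAB (hA1.trans hB1.symm)
    simp [hoff]
  · -- main case : k ≥ 2
    set G : Finset ℕ := Finset.Icc 1 n with hG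
    set 𝒦 : Finset (Finset ℕ) := Finset.powersetCard k G with h𝒦
    set s : ℕ := F.card with hs
    set d : ℕ → ℕ := fun x => (F.filter (fun A => x ∈ A)).card with hd
    set M : ℕ := Nat.choose (n - 1) (k - 1) with hM
    set m : ℕ := Nat.choose (n - 2) (k - 2) with hm
    set P : ℕ := Nat.choose (n - 2) (k - 1) with hP
    set C : ℕ := Nat.choose n k with hC
    have hn4 : 4 ≤ n := by omega
    have hGcard : G.card = n := by rw [hG, Nat.card_Icc]; omega
    have hsub : ∀ A ∈ F, A ⊆ G := fun A hA => (hmem A hA).1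
    have hFK : F ⊆ 𝒦 := by
      intro A hA
      rw [h𝒦, Finset.mem_powersetCard]
      exact ⟨(hmem A hA).1, (hmem A hA).2⟩
    have h𝒦card : 𝒦.card = C := by rw [h𝒦, Finset.card_powersetCard, hGcard]
    have hsC : s ≤ C := h𝒦card ▸ Finset.card_le_card hFK
    have h𝒦sub : ∀ A ∈ 𝒦, A ⊆ G := by
      intro A hA; rw [h𝒦, Finset.mem_powersetCard] at hA; exact hA.1
    -- degree sum
    have hdeg_sum : ∑ x ∈ G, d x = k * s := by
      have := Stmt0Aux2.swap_sum (R := ℕ) F G hsub (fun _ => 1)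
      simp only [mul_one, Nat.cast_id] at this
      rw [← this]
      rw [Finset.sum_congr rfl fun A hA => by
        rw [Finset.sum_const, smul_eq_mul, mul_one, (hmem A hA).2]]
      rw [Finset.sum_const, smul_eq_mul, mul_comm]
    -- the off-diagonal sum identity
    have hoff_eq : (∑ p ∈ F.offDiag, (p.1 ∩ p.2).card) + k * s = ∑ x ∈ G, d x * d x := by
      have hprod : ∑ p ∈ F ×ˢ F, (p.1 ∩ p.2).card
          = (∑ p ∈ F.diag, (p.1 ∩ p.2).card) + ∑ p ∈ F.offDiag, (p.1 ∩ p.2).card := by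
        rw [← Finset.diag_union_offDiag F, Finset.sum_union (Finset.disjoint_diag_offDiag F)]
      have hdiag : ∑ p ∈ F.diag, (p.1 ∩ p.2).card = k * s := by
        have hterm : ∀ p ∈ F.diag, (p.1 ∩ p.2).card = k := by
          intro p hp
          rw [Finset.mem_diag] at hp
          rw [← hp.2, Finset.inter_self]
          exact (hmem p.1 hp.1).2
        rw [Finset.sum_congr rfl hterm, Finset.sum_const, Finset.diag_card, smul_eq_mul, mul_comm]
      have hsq : ∑ p ∈ F ×ˢ F, (p.1 ∩ p.2).card = ∑ x ∈ G, d x * d x := by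
        rw [Finset.sum_product]
        have hAB : ∀ A ∈ F, ∀ B ∈ F, (A ∩ B).card
            = ∑ x ∈ G, if x ∈ A ∧ x ∈ B then 1 else 0 := by
          intro A hA B hB
          have hsubAB : A ∩ B ⊆ G := (Finset.inter_subset_left).trans (hsub A hA)
          calc (A ∩ B).card = ∑ _x ∈ G ∩ (A ∩ B), 1 := by
                rw [Finset.inter_eq_right.mpr hsubAB, Finset.sum_const, smul_eq_mul, mul_one]
            _ = ∑ x ∈ G, if x ∈ A ∩ B then 1 else 0 := (Finset.sum_ite_mem _ _ _).symm
            _ = ∑ x ∈ G, if x ∈ A ∧ x ∈ B then 1 else 0 := by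
                exact Finset.sum_congr rfl fun x _ => by simp [Finset.mem_inter]
        calc ∑ A ∈ F, ∑ B ∈ F, (A ∩ B).card
            = ∑ A ∈ F, ∑ B ∈ F, ∑ x ∈ G, (if x ∈ A ∧ x ∈ B then 1 else 0) :=
              Finset.sum_congr rfl fun A hA => Finset.sum_congr rfl fun B hB => hAB A hA B hB
          _ = ∑ A ∈ F, ∑ x ∈ G, ∑ B ∈ F, (if x ∈ A ∧ x ∈ B then 1 else 0) :=
              Finset.sum_congr rfl fun A _ => Finset.sum_comm
          _ = ∑ x ∈ G, ∑ A ∈ F, ∑ B ∈ F, (if x ∈ A ∧ x ∈ B then 1 else 0) := Finset.sum_comm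
          _ = ∑ x ∈ G, d x * d x := by
              refine Finset.sum_congr rfl fun x _ => ?_
              have hAterm : ∀ A ∈ F, (∑ B ∈ F, if x ∈ A ∧ x ∈ B then 1 else 0)
                  = (if x ∈ A then 1 else 0) * d x := by
                intro A _
                by_cases hxA : x ∈ A
                · simp only [hxA, true_and, if_true, one_mul]
                  rw [Finset.sum_boole, Nat.cast_id, hd]
                · simp [hxA]
              rw [Finset.sum_congr rfl hAterm, ← Finset.sum_mul, Finset.sum_boole, Nat.cast_id,
                hd]
      omega
    -- counting lemmas for the complete k-uniform family on G
    have hcount1 : ∀ x ∈ G, (𝒦.filter (fun A => x ∈ A)).card = M := by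
      intro x hx
      have hpred : 𝒦.filter (fun A => x ∈ A) = 𝒦.filter (fun A => {x} ⊆ A) :=
        Finset.filter_congr fun A _ => by simp
      rw [hpred, h𝒦, Stmt0Aux.count_supersets (Finset.singleton_subset_iff.mpr hx)
        (by rw [Finset.card_singleton]; omega), hGcard, Finset.card_singleton, hM]
    have hcount2 : ∀ x ∈ G, ∀ y ∈ G, x ≠ y →
        (𝒦.filter (fun A => x ∈ A ∧ y ∈ A)).card = m := by
      intro x hx y hy hxy
      have hpred : 𝒦.filter (fun A => x ∈ A ∧ y ∈ A) = 𝒦.filter (fun A => {x, y} ⊆ A) :=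
        Finset.filter_congr fun A _ => by simp [Finset.insert_subset_iff]
      have hpair : ({x, y} : Finset ℕ).card = 2 := Finset.card_pair hxy
      have hsubxy : ({x, y} : Finset ℕ) ⊆ G := by
        rw [Finset.insert_subset_iff, Finset.singleton_subset_iff]; exact ⟨hx, hy⟩
      rw [hpred, h𝒦, Stmt0Aux.count_supersets hsubxy (by rw [hpair]; omega), hGcard, hpair, hm]
    -- binomial identities
    have R1 : n * M = C * k := by
      have h := Nat.add_one_mul_choose_eq (n - 1) (k - 1)
      have e1 : n - 1 + 1 = n := by omega
      have e2 : k - 1 + 1 = k := by omega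
      simp only [Nat.succ_eq_add_one, e1, e2] at h
      rw [hM, hC]; exact h
    have R2 : (n - 1) * m = M * (k - 1) := by
      have h := Nat.add_one_mul_choose_eq (n - 2) (k - 2)
      have e1 : n - 2 + 1 = n - 1 := by omega
      have e2 : k - 2 + 1 = k - 1 := by omega
      simp only [Nat.succ_eq_add_one, e1, e2] at h
      rw [hm, hM]; exact h
    have R2' : (n - 1) * P = M * (n - k) := by
      have ha := Nat.add_one_mul_choose_eq (n - 2) (k - 1)
      have e1 : n - 2 + 1 = n - 1 := by omega
      have e2 : k - 1 + 1 = k := by omega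
      simp only [Nat.succ_eq_add_one, e1, e2] at ha
      have hb := Nat.choose_succ_right_eq (n - 1) (k - 1)
      have e3 : n - 1 - (k - 1) = n - k := by omega
      rw [e2, e3] at hb
      rw [hP, hM, ha, hb]
    have R3 : M = m + P := by
      have h := Nat.choose_succ_succ (n - 2) (k - 2)
      have e1 : n - 2 + 1 = n - 1 := by omega
      have e2 : k - 2 + 1 = k - 1 := by omega
      simp only [Nat.succ_eq_add_one, e1, e2] at h
      rw [hM, hm, hP]; exact h
    have hm1 : 1 ≤ m := Nat.choose_pos (by omega)
    have hM1 : 1 ≤ M := Nat.choose_pos (by omega)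
    have hEKR : s ≤ M := Stmt0Aux3.ekr_nat n k hk hn F hmem hint
    -- pass to the reals
    have hn1R : (1:ℝ) ≤ (n:ℝ) := by exact_mod_cast (by omega : 1 ≤ n)
    have hn4R : (4:ℝ) ≤ (n:ℝ) := by exact_mod_cast hn4
    have hk2R : (2:ℝ) ≤ (k:ℝ) := by exact_mod_cast hk2
    have hknR : (k:ℝ) ≤ (n:ℝ) := by exact_mod_cast (by omega : k ≤ n)
    have hM1R : (1:ℝ) ≤ (M:ℝ) := by exact_mod_cast hM1
    have hm1R : (1:ℝ) ≤ (m:ℝ) := by exact_mod_cast hm1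
    have hs0R : (0:ℝ) ≤ (s:ℝ) := by positivity
    have hsMR : (s:ℝ) ≤ (M:ℝ) := by exact_mod_cast hEKR
    have hsCR : (s:ℝ) ≤ (C:ℝ) := by exact_mod_cast hsC
    have hP0R : (0:ℝ) ≤ (P:ℝ) := by positivity
    have hCpos : (0:ℝ) < (C:ℝ) := by exact_mod_cast Nat.choose_pos (by omega : k ≤ n)
    have R1R : (n:ℝ) * (M:ℝ) = (C:ℝ) * (k:ℝ) := by exact_mod_cast R1
    have R2R : ((n:ℝ) - 1) * (m:ℝ) = (M:ℝ) * ((k:ℝ) - 1) := by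
      have h := congrArg (Nat.cast : ℕ → ℝ) R2
      push_cast [Nat.cast_sub (by omega : 1 ≤ n), Nat.cast_sub hk] at h
      exact h
    have R2'R : ((n:ℝ) - 1) * (P:ℝ) = (M:ℝ) * ((n:ℝ) - (k:ℝ)) := by
      have h := congrArg (Nat.cast : ℕ → ℝ) R2'
      push_cast [Nat.cast_sub (by omega : 1 ≤ n), Nat.cast_sub (by omega : k ≤ n)] at h
      exact h
    have hPval : (P:ℝ) = (M:ℝ) - (m:ℝ) := by
      have h := congrArg (Nat.cast : ℕ → ℝ) R3
      push_cast at h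
      linarith
    set e : ℕ → ℝ := fun x => (n:ℝ) * (d x : ℝ) - (k:ℝ) * (s:ℝ) with he
    set E : ℝ := ∑ x ∈ G, (e x)^2 with hEdef
    set SD : ℝ := ∑ x ∈ G, ((d x : ℝ))^2 with hSDdef
    have hdegR : ∑ x ∈ G, ((d x : ℝ)) = (k:ℝ) * (s:ℝ) := by
      have h := congrArg (Nat.cast : ℕ → ℝ) hdeg_sum
      push_cast at h
      exact h
    have f1 : ∑ x ∈ G, e x = 0 := by
      simp only [he]
      rw [Finset.sum_sub_distrib, ← Finset.mul_sum, hdegR, Finset.sum_const, hGcard,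
        nsmul_eq_mul]
      ring
    have f6 : E = (n:ℝ)^2 * SD - (n:ℝ) * ((k:ℝ) * (s:ℝ))^2 := by
      simp only [hEdef, he, hSDdef]
      have expand : ∀ x ∈ G, ((n:ℝ) * (d x:ℝ) - (k:ℝ)*(s:ℝ))^2
          = (n:ℝ)^2*((d x:ℝ))^2 - 2*(n:ℝ)*(k:ℝ)*(s:ℝ)*((d x:ℝ)) + ((k:ℝ)*(s:ℝ))^2 :=
        fun x _ => by ring
      rw [Finset.sum_congr rfl expand]
      rw [Finset.sum_add_distrib, Finset.sum_sub_distrib, ← Finset.mul_sum, ← Finset.mul_sum,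
        hdegR, Finset.sum_const, hGcard, nsmul_eq_mul]
      ring
    have hEnonneg : (0:ℝ) ≤ E := by
      rw [hEdef]; exact Finset.sum_nonneg fun x _ => sq_nonneg _
    have f2 : ∑ A ∈ 𝒦, (∑ x ∈ A, e x) = 0 := by
      rw [Stmt0Aux2.swap_sum 𝒦 G h𝒦sub e]
      have hM' : ∀ x ∈ G, ((𝒦.filter (fun A => x ∈ A)).card : ℝ) * e x = (M:ℝ) * e x := by
        intro x hx; rw [hcount1 x hx]
      rw [Finset.sum_congr rfl hM', ← Finset.mul_sum, f1, mul_zero]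
    have f4 : (n:ℝ) * ∑ A ∈ F, (∑ x ∈ A, e x) = E := by
      rw [Stmt0Aux2.swap_sum F G hsub e]
      have hdx : ∀ x : ℕ, (F.filter (fun A => x ∈ A)).card = d x := fun _ => rfl
      have h1 : E = (n:ℝ) * (∑ x ∈ G, (d x:ℝ) * e x) - ((k:ℝ)*(s:ℝ)) * ∑ x ∈ G, e x := by
        simp only [hEdef, he]
        rw [Finset.mul_sum, Finset.mul_sum, ← Finset.sum_sub_distrib]
        exact Finset.sum_congr rfl fun x _ => by ring
      simp only [hdx]
      rw [h1, f1, mul_zero, sub_zero]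
    have f3 : ∑ A ∈ 𝒦, (∑ x ∈ A, e x)^2 = (P:ℝ) * E := by
      have hsq : ∀ A ∈ 𝒦, (∑ x ∈ A, e x)^2 = (∑ x ∈ A, e x) * (∑ y ∈ A, e y) :=
        fun A _ => sq (∑ x ∈ A, e x)
      rw [Finset.sum_congr rfl hsq, Stmt0Aux2.swap_sum2 𝒦 G h𝒦sub e]
      have inner : ∀ x ∈ G,
          (∑ y ∈ G, ((𝒦.filter (fun A => x ∈ A ∧ y ∈ A)).card : ℝ) * (e x * e y))
          = (M:ℝ) * (e x * e x) - (m:ℝ) * (e x * e x) := by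
        intro x hx
        rw [← Finset.add_sum_erase G _ hx]
        have hxx : (𝒦.filter (fun A => x ∈ A ∧ x ∈ A)).card = M := by
          have hp : 𝒦.filter (fun A => x ∈ A ∧ x ∈ A) = 𝒦.filter (fun A => x ∈ A) :=
            Finset.filter_congr fun A _ => by simp
          rw [hp]; exact hcount1 x hx
        have hrest : ∀ y ∈ G.erase x,
            ((𝒦.filter (fun A => x ∈ A ∧ y ∈ A)).card : ℝ) * (e x * e y)
            = (m:ℝ) * (e x * e y) := by
          intro y hy
          rw [hcount2 x hx y (Finset.mem_of_mem_erase hy)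
            (Ne.symm (Finset.ne_of_mem_erase hy))]
        rw [hxx, Finset.sum_congr rfl hrest, ← Finset.mul_sum]
        have herase : ∑ y ∈ G.erase x, (e x * e y) = e x * (0 - e x) := by
          rw [← Finset.mul_sum, Finset.sum_erase_eq_sub hx, f1]
        rw [herase]
        ring
      rw [Finset.sum_congr rfl inner, Finset.sum_sub_distrib, ← Finset.mul_sum, ← Finset.mul_sum]
      have hEE : ∑ x ∈ G, (e x * e x) = E := by
        rw [hEdef]; exact Finset.sum_congr rfl fun x _ => (sq (e x)).symm
      rw [hEE, hPval]; ring
    -- Cauchy-Schwarz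
    set u : Finset ℕ → ℝ := fun A => (if A ∈ F then (C:ℝ) else 0) - (s:ℝ) with hu
    have hcs := Finset.sum_mul_sq_le_sq_mul_sq 𝒦 u (fun A => ∑ x ∈ A, e x)
    have hud : ∑ A ∈ 𝒦, u A * (∑ x ∈ A, e x) = (C:ℝ) * ∑ A ∈ F, (∑ x ∈ A, e x) := by
      have hterm : ∀ A ∈ 𝒦, u A * (∑ x ∈ A, e x)
          = (if A ∈ F then (C:ℝ) * (∑ x ∈ A, e x) else 0) - (s:ℝ) * (∑ x ∈ A, e x) := by
        intro A _
        by_cases hA : A ∈ F <;> simp [hu, hA] <;> ring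
      rw [Finset.sum_congr rfl hterm, Finset.sum_sub_distrib, ← Finset.mul_sum, f2, mul_zero,
        sub_zero, Finset.sum_ite_mem, Finset.inter_eq_right.mpr hFK, ← Finset.mul_sum]
    have hu2 : ∑ A ∈ 𝒦, (u A)^2 = (C:ℝ) * (s:ℝ) * ((C:ℝ) - (s:ℝ)) := by
      have hterm2 : ∀ A ∈ 𝒦, (u A)^2
          = (if A ∈ F then ((C:ℝ) - (s:ℝ))^2 else (s:ℝ)^2) := by
        intro A _
        by_cases hA : A ∈ F <;> simp [hu, hA] <;> ring
      rw [Finset.sum_congr rfl hterm2, Finset.sum_ite, Finset.sum_const, Finset.sum_const]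
      have hfilt : 𝒦.filter (fun A => A ∈ F) = F := by
        apply Finset.Subset.antisymm
        · intro A hA; exact (Finset.mem_filter.mp hA).2
        · intro A hA; exact Finset.mem_filter.mpr ⟨hFK hA, hA⟩
      have hfiltnot : (𝒦.filter (fun A => ¬ A ∈ F)).card = C - s := by
        have := Finset.card_filter_add_card_filter_not
          (s := 𝒦) (p := fun A => A ∈ F)
        rw [hfilt, h𝒦card] at this
        omega
      rw [hfilt, hfiltnot, nsmul_eq_mul, nsmul_eq_mul, Nat.cast_sub hsC]
      ring
    have hcs2 : ((C:ℝ) * ∑ A ∈ F, (∑ x ∈ A, e x))^2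
        ≤ (C:ℝ) * (s:ℝ) * ((C:ℝ) - (s:ℝ)) * ((P:ℝ) * E) := by
      rw [← hud, ← hu2, ← f3]; exact hcs
    have MAINE : (C:ℝ) * E ≤ (n:ℝ)^2 * (s:ℝ) * (P:ℝ) * ((C:ℝ) - (s:ℝ)) := by
      rcases eq_or_lt_of_le hEnonneg with hE0 | hEpos
      · rw [← hE0, mul_zero]
        have : (0:ℝ) ≤ (C:ℝ) - (s:ℝ) := by linarith
        positivity
      · have hsq2 : ((C:ℝ)*E) * ((C:ℝ)*E)
            ≤ ((n:ℝ)^2 * (s:ℝ) * (P:ℝ) * ((C:ℝ) - (s:ℝ))) * ((C:ℝ)*E) := by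
          have step1 : ((C:ℝ)*E) * ((C:ℝ)*E)
              = (n:ℝ)^2 * ((C:ℝ) * ∑ A ∈ F, (∑ x ∈ A, e x))^2 := by
            rw [← f4]; ring
          have step2 : (n:ℝ)^2 * ((C:ℝ) * ∑ A ∈ F, (∑ x ∈ A, e x))^2
              ≤ (n:ℝ)^2 * ((C:ℝ) * (s:ℝ) * ((C:ℝ) - (s:ℝ)) * ((P:ℝ) * E)) :=
            mul_le_mul_of_nonneg_left hcs2 (sq_nonneg _)
          calc ((C:ℝ)*E) * ((C:ℝ)*E) = (n:ℝ)^2 * ((C:ℝ) * ∑ A ∈ F, (∑ x ∈ A, e x))^2 := step1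
            _ ≤ (n:ℝ)^2 * ((C:ℝ) * (s:ℝ) * ((C:ℝ) - (s:ℝ)) * ((P:ℝ) * E)) := step2
            _ = ((n:ℝ)^2 * (s:ℝ) * (P:ℝ) * ((C:ℝ) - (s:ℝ))) * ((C:ℝ)*E) := by ring
        exact le_of_mul_le_mul_right hsq2 (mul_pos hCpos hEpos)
    -- eliminate C and P
    have MAIN3 : ((n:ℝ) - 1) * E
        ≤ (n:ℝ) * (s:ℝ) * ((n:ℝ) - (k:ℝ)) * ((n:ℝ)*(M:ℝ) - (k:ℝ)*(s:ℝ)) := by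
      have hfac : (0:ℝ) ≤ (k:ℝ)^2 * ((n:ℝ) - 1) :=
        mul_nonneg (sq_nonneg _) (by linarith)
      have h7 := mul_le_mul_of_nonneg_left MAINE hfac
      have eL : (k:ℝ)^2 * ((n:ℝ)-1) * ((C:ℝ)*E)
          = ((k:ℝ)*(n:ℝ)*(M:ℝ)) * (((n:ℝ)-1)*E) := by
        linear_combination (-(k:ℝ)*((n:ℝ)-1)*E) * R1R
      have eR : (k:ℝ)^2 * ((n:ℝ)-1) * ((n:ℝ)^2 * (s:ℝ) * (P:ℝ) * ((C:ℝ) - (s:ℝ)))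
          = ((k:ℝ)*(n:ℝ)*(M:ℝ))
            * ((n:ℝ) * (s:ℝ) * ((n:ℝ) - (k:ℝ)) * ((n:ℝ)*(M:ℝ) - (k:ℝ)*(s:ℝ))) := by
        linear_combination ((k:ℝ)^2*(n:ℝ)^2*(s:ℝ)*((C:ℝ)-(s:ℝ))) * R2'R
          - ((k:ℝ)*(n:ℝ)^2*(s:ℝ)*(M:ℝ)*((n:ℝ)-(k:ℝ))) * R1R
      rw [eL, eR] at h7
      have hKNM : (0:ℝ) < (k:ℝ)*(n:ℝ)*(M:ℝ) :=
        mul_pos (mul_pos (by linarith) (by linarith)) (by linarith)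
      exact le_of_mul_le_mul_left h7 hKNM
    -- final polynomial comparison
    set TR : ℝ := (M:ℝ)*((M:ℝ) - 1) + ((n:ℝ) - 1)*(m:ℝ)*((m:ℝ) - 1) with hTR
    have eT : ((n:ℝ) - 1) * TR = ((n:ℝ) - 1)*(M:ℝ)*((M:ℝ) - 1)
        + ((k:ℝ) - 1)*(M:ℝ)*(((k:ℝ) - 1)*(M:ℝ) - ((n:ℝ) - 1)) := by
      simp only [hTR]
      linear_combination (((n:ℝ)-1)*(m:ℝ) + ((k:ℝ)-1)*(M:ℝ) - ((n:ℝ)-1)) * R2R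
    have hQ : (0:ℝ) ≤ ((n:ℝ)-1)*((M:ℝ)-1) + ((k:ℝ)-1)*(((k:ℝ)-1)*(M:ℝ) - ((n:ℝ)-1))
        + (k:ℝ)*((k:ℝ)-1)*(s:ℝ) := by
      have h1 : ((n:ℝ)-1) ≤ ((k:ℝ)-1)*(M:ℝ) := by
        have h0 : ((n:ℝ)-1)*1 ≤ ((n:ℝ)-1)*(m:ℝ) :=
          mul_le_mul_of_nonneg_left hm1R (by linarith)
        rw [mul_one] at h0
        exact h0.trans_eq (R2R.trans (mul_comm _ _))
      have h2 : (0:ℝ) ≤ ((n:ℝ)-1)*((M:ℝ)-1) := mul_nonneg (by linarith) (by linarith)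
      have h3 : (0:ℝ) ≤ ((k:ℝ)-1)*(((k:ℝ)-1)*(M:ℝ) - ((n:ℝ)-1)) :=
        mul_nonneg (by linarith) (by linarith)
      have h4 : (0:ℝ) ≤ (k:ℝ)*((k:ℝ)-1)*(s:ℝ) :=
        mul_nonneg (mul_nonneg (by linarith) (by linarith)) hs0R
      linarith
    have h7b : ((n:ℝ)-1)*(((n:ℝ)-1)*E)
        ≤ ((n:ℝ)-1)*((n:ℝ) * (s:ℝ) * ((n:ℝ) - (k:ℝ)) * ((n:ℝ)*(M:ℝ) - (k:ℝ)*(s:ℝ))) :=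
      mul_le_mul_of_nonneg_left MAIN3 (by linarith)
    have h8 : (0:ℝ) ≤ (n:ℝ)*(((M:ℝ)-(s:ℝ)) * ((n:ℝ)*((n:ℝ)-1)*(((n:ℝ)-1)*((M:ℝ)-1)
        + ((k:ℝ)-1)*(((k:ℝ)-1)*(M:ℝ) - ((n:ℝ)-1)) + (k:ℝ)*((k:ℝ)-1)*(s:ℝ)))) := by
      apply mul_nonneg (by linarith)
      apply mul_nonneg (by linarith)
      apply mul_nonneg ?_ hQ
      have : (0:ℝ) ≤ ((n:ℝ))*((n:ℝ)-1) := mul_nonneg (by linarith) (by linarith)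
      linarith
    have goal2 : (n:ℝ)^2*((n:ℝ)-1)^2*((k:ℝ)*(s:ℝ) + TR) - (n:ℝ)^2*((n:ℝ)-1)^2*SD
        = (((n:ℝ)-1)*((n:ℝ) * (s:ℝ) * ((n:ℝ) - (k:ℝ)) * ((n:ℝ)*(M:ℝ) - (k:ℝ)*(s:ℝ)))
            - ((n:ℝ)-1)*(((n:ℝ)-1)*E))
          + (n:ℝ)*(((M:ℝ)-(s:ℝ)) * ((n:ℝ)*((n:ℝ)-1)*(((n:ℝ)-1)*((M:ℝ)-1)
            + ((k:ℝ)-1)*(((k:ℝ)-1)*(M:ℝ) - ((n:ℝ)-1)) + (k:ℝ)*((k:ℝ)-1)*(s:ℝ)))) := by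
      linear_combination (((n:ℝ)-1)^2) * f6 + ((n:ℝ)^2*((n:ℝ)-1)) * eT
    have hfinal : SD ≤ (k:ℝ)*(s:ℝ) + TR := by
      have hpos : (0:ℝ) < (n:ℝ)^2*((n:ℝ)-1)^2 := by
        have h1 : (0:ℝ) < (n:ℝ)^2 := pow_pos (by linarith) 2
        have h2 : (0:ℝ) < ((n:ℝ)-1)^2 := pow_pos (by linarith) 2
        exact mul_pos h1 h2
      have hcomb : (n:ℝ)^2*((n:ℝ)-1)^2*SD ≤ (n:ℝ)^2*((n:ℝ)-1)^2*((k:ℝ)*(s:ℝ) + TR) := by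
        linarith [h7b, h8, goal2]
      exact le_of_mul_le_mul_left hcomb hpos
    -- back to the naturals
    have hRHS : 2 * (Nat.choose M 2 + (n-1) * Nat.choose m 2)
        = M*(M-1) + (n-1)*(m*(m-1)) := by
      rw [mul_add, Stmt0Aux.two_mul_choose_two, mul_left_comm,
        Stmt0Aux.two_mul_choose_two]
    have hle : ∑ x ∈ G, d x * d x ≤ k * s + (M*(M-1) + (n-1)*(m*(m-1))) := by
      have hcast1 : ((∑ x ∈ G, d x * d x : ℕ) : ℝ) = SD := by
        rw [hSDdef]
        push_cast
        exact Finset.sum_congr rfl fun x _ => (sq ((d x : ℝ))).symm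
      have hcast2 : ((k * s + (M*(M-1) + (n-1)*(m*(m-1))) : ℕ) : ℝ)
          = (k:ℝ)*(s:ℝ) + TR := by
        push_cast [Nat.cast_sub hM1, Nat.cast_sub hm1, Nat.cast_sub (by omega : 1 ≤ n)]
        rw [hTR]; ring
      rw [← Nat.cast_le (α := ℝ), hcast1, hcast2]
      exact hfinal
    rw [hRHS]
    have h9 : (∑ p ∈ F.offDiag, (p.1 ∩ p.2).card) + k * s
        ≤ (M*(M-1) + (n-1)*(m*(m-1))) + k * s := by
      rw [hoff_eq]; linarith [hle]
    exact le_of_add_le_add_right h9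

/-- If `F` is an intersecting family of `k`-subsets of `[n]` with `n ≥ 2k`,
then the sum of `|A ∩ B|` over unordered pairs of distinct members of `F` is at most
`C(C(n-1,k-1),2) + (n-1)·C(C(n-2,k-2),2)`.  The sum over unordered pairs is expressed
via the sum over `F.offDiag` (ordered pairs of distinct members), which is exactly twice
the unordered-pair sum; accordingly the bound is doubled. -/
theorem stmt0 (n k : ℕ) (hk : 1 ≤ k) (hn : 2 * k ≤ n)
    (F : Finset (Finset ℕ))
    (hmem : ∀ A ∈ F, A ⊆ Finset.Icc 1 n ∧ A.card = k)
    (hint : ∀ A ∈ F, ∀ B ∈ F, (A ∩ B).Nonempty) :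
    ∑ p ∈ F.offDiag, (p.1 ∩ p.2).card ≤
      2 * (Nat.choose (Nat.choose (n - 1) (k - 1)) 2 +
        (n - 1) * Nat.choose (Nat.choose (n - 2) (k - 2)) 2) :=
  stmt0' n k hk hn F hmem hint
end

section
/- Let n ≥ 2k and let π be a cyclic permutation of [n]. If G_1, ..., G_r are distinct k-intervals of π that pairwise intersect, then r ≤ k. -/
/-- `I` is the `m`-interval of the cyclic permutation `π` of `[n]` starting at position `i`,
i.e. `I = {π(i), π(i+1), …, π(i+m-1)}` with positions taken modulo `n`. -/
def IsIntervalFrom (n : ℕ) (π : ZMod n ≃ Fin n) (i : ZMod n) (m : ℕ)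
    (I : Finset (Fin n)) : Prop :=
  I = Finset.image (fun t : Fin m => π (i + ((t : ℕ) : ZMod n))) Finset.univ

/-- Katona's lemma: if `n ≥ 2k` and `G 1, …, G r` are distinct `k`-intervals
of a cyclic permutation `π` of `[n]` that pairwise intersect, then `r ≤ k`. -/
theorem stmt8 (n k r : ℕ) (hn : 2 * k ≤ n) (π : ZMod n ≃ Fin n)
    (G : Fin r → Finset (Fin n)) (hinj : Function.Injective G)
    (hintv : ∀ j, ∃ i, IsIntervalFrom n π i k (G j))
    (hint : ∀ j j', (G j ∩ G j').Nonempty) : r ≤ k := by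
  rcases Nat.eq_zero_or_pos k with hk0 | hk
  · subst hk0
    rcases Nat.eq_zero_or_pos r with hr0 | hr
    · omega
    obtain ⟨x, hx⟩ := hint ⟨0, hr⟩ ⟨0, hr⟩
    obtain ⟨i, hi⟩ := hintv ⟨0, hr⟩
    rw [IsIntervalFrom] at hi
    rw [Finset.mem_inter, hi] at hx
    simp at hx
  rcases Nat.eq_zero_or_pos r with hr0 | hr
  · omega
  have hn0 : 0 < n := by omega
  haveI : NeZero n := ⟨hn0.ne'⟩
  choose s hs using hintv
  have hmem : ∀ j (x : Fin n), x ∈ G j ↔ ∃ t : Fin k, π (s j + ((t : ℕ) : ZMod n)) = x := by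
    intro j x
    have h := hs j
    rw [IsIntervalFrom] at h
    rw [h]
    simp [Finset.mem_image]
  set j0 : Fin r := ⟨0, hr⟩ with hj0
  have key : ∀ j, ∃ N : ℕ, N ≤ 2 * k - 2 ∧
      s j - s j0 + ((k - 1 : ℕ) : ZMod n) = (N : ZMod n) := by
    intro j
    obtain ⟨x, hx⟩ := hint j j0
    rw [Finset.mem_inter] at hx
    obtain ⟨t, ht⟩ := (hmem j x).1 hx.1
    obtain ⟨t', ht'⟩ := (hmem j0 x).1 hx.2
    have heq : s j + ((t : ℕ) : ZMod n) = s j0 + ((t' : ℕ) : ZMod n) :=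
      π.injective (ht.trans ht'.symm)
    have ht1 : (t : ℕ) < k := t.isLt
    have ht2 : (t' : ℕ) < k := t'.isLt
    refine ⟨(t' : ℕ) + (k - 1) - (t : ℕ), by omega, ?_⟩
    have hle : (t : ℕ) ≤ (t' : ℕ) + (k - 1) := by omega
    rw [Nat.cast_sub hle, Nat.cast_add]
    linear_combination heq
  choose N hN hNe using key
  have hdisj : ∀ j j' : Fin r, s j' = s j + (k : ZMod n) → False := by
    intro j j' hss
    obtain ⟨x, hx⟩ := hint j j'
    rw [Finset.mem_inter] at hx
    obtain ⟨a, ha⟩ := (hmem j x).1 hx.1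
    obtain ⟨b, hb⟩ := (hmem j' x).1 hx.2
    have h1 : s j + ((a : ℕ) : ZMod n) = s j' + ((b : ℕ) : ZMod n) :=
      π.injective (ha.trans hb.symm)
    rw [hss] at h1
    have h2 : (((a : ℕ) : ℕ) : ZMod n) = (((k + (b : ℕ)) : ℕ) : ZMod n) := by
      push_cast
      linear_combination h1
    have h3 := congrArg ZMod.val h2
    rw [ZMod.val_natCast_of_lt (by omega), ZMod.val_natCast_of_lt (by omega)] at h3
    omega
  have hXeq : ∀ j j' : Fin r, N j = N j' → j = j' := by
    intro j j' hNN
    have h1 : s j - s j0 + ((k - 1 : ℕ) : ZMod n)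
        = s j' - s j0 + ((k - 1 : ℕ) : ZMod n) := by
      rw [hNe j, hNe j', hNN]
    have h2 : s j = s j' := by linear_combination h1
    have hj := hs j
    have hj' := hs j'
    rw [IsIntervalFrom] at hj hj'
    exact hinj (by rw [hj, hj', h2])
  have hXk : ∀ j j' : Fin r, N j' = N j + k → False := by
    intro j j' hNN
    have h1 : s j' - s j0 + ((k - 1 : ℕ) : ZMod n)
        = (s j - s j0 + ((k - 1 : ℕ) : ZMod n)) + (k : ZMod n) := by
      rw [hNe j, hNe j', hNN]
      push_cast
      ring
    have h2 : s j' = s j + (k : ZMod n) := by linear_combination h1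
    exact hdisj j j' h2
  have hcard : Fintype.card (Fin r) ≤ Fintype.card (Fin k) := by
    apply Fintype.card_le_of_injective (fun j => (⟨N j % k, Nat.mod_lt _ hk⟩ : Fin k))
    intro j j' hF
    have hmod : N j % k = N j' % k := by
      have := congrArg Fin.val hF
      simpa using this
    have b1 := hN j
    have b2 := hN j'
    have hdj : N j / k ≤ 1 := by
      have : N j / k < 2 := (Nat.div_lt_iff_lt_mul hk).2 (by omega)
      omega
    have hdj' : N j' / k ≤ 1 := by
      have : N j' / k < 2 := (Nat.div_lt_iff_lt_mul hk).2 (by omega)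
      omega
    have e1 := Nat.div_add_mod (N j) k
    have e2 := Nat.div_add_mod (N j') k
    have hcase : N j = N j' ∨ N j' = N j + k ∨ N j = N j' + k := by
      rcases Nat.le_one_iff_eq_zero_or_eq_one.1 hdj with h | h <;>
        rcases Nat.le_one_iff_eq_zero_or_eq_one.1 hdj' with h' | h' <;>
          rw [h] at e1 <;> rw [h'] at e2 <;> omega
    rcases hcase with h | h | h
    · exact hXeq j j' h
    · exact absurd h (fun hh => hXk j j' hh)
    · exact absurd h (fun hh => hXk j' j hh)
  simpa using hcard
end

section
/- Let n > 2k and let π be a cyclic permutation of [n]. If G_1, ..., G_k are k distinct k-intervals of π that pairwise intersect, then there is a fixed element x ∈ [n] such that G_1, ..., G_k are exactly all the k-intervals of π containing x. -/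
lemma cast_sub_cast {n : ℕ} [NeZero n] (a b : ℕ) (hb : b ≤ n) :
    ((a : ZMod n) - (b : ZMod n)) = ((a + (n - b) : ℕ) : ZMod n) := by
  push_cast [Nat.cast_sub hb]
  rw [ZMod.natCast_self]
  ring

lemma val_sub_cast {n : ℕ} [NeZero n] (a b : ℕ) (_ha : a < n) (hb : b < n) (h : b ≤ a) :
    ((a : ZMod n) - (b : ZMod n)).val = a - b := by
  rw [cast_sub_cast a b hb.le, ZMod.val_natCast,
    show a + (n - b) = (a - b) + n by omega, Nat.add_mod_right, Nat.mod_eq_of_lt (by omega)]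

lemma val_sub_cast' {n : ℕ} [NeZero n] (a b : ℕ) (ha : a < n) (hb : b < n) (h : a < b) :
    ((a : ZMod n) - (b : ZMod n)).val = a + n - b := by
  rw [cast_sub_cast a b hb.le, ZMod.val_natCast, Nat.mod_eq_of_lt (by omega)]
  omega

lemma core0 (n k : ℕ) (hk : 0 < k) (hn : 2 * k < n) (s : Fin k → ZMod n)
    (hs : Function.Injective s) (h0 : s ⟨0, hk⟩ = 0)
    (hp : ∀ j j', (s j - s j').val < k ∨ (s j' - s j).val < k) :
    ∃ m : ZMod n, ∀ c : ZMod n, (c - m).val < k ↔ ∃ j, s j = c := by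
  classical
  haveI : NeZero n := ⟨by omega⟩
  have hvlt : ∀ j, (s j).val < n := fun j => ZMod.val_lt _
  have hcast : ∀ j, s j = (((s j).val : ℕ) : ZMod n) :=
    fun j => (ZMod.natCast_rightInverse (s j)).symm
  have hvinj : ∀ j j', (s j).val = (s j').val → j = j' := by
    intro j j' h
    exact hs (ZMod.val_injective n h)
  have hval : ∀ j, (s j).val < k ∨ n - k < (s j).val := by
    intro j
    rcases hp j ⟨0, hk⟩ with h | h
    · rw [h0, sub_zero] at h; omega
    · rw [h0, zero_sub] at h
      by_cases hz : s j = 0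
      · left; rw [hz]; simpa using hk
      · right
        rw [ZMod.neg_val, if_neg hz] at h
        have := hvlt j; omega
  -- pair condition at the level of values
  have hpn : ∀ j j', (s j').val ≤ (s j).val →
      (s j).val - (s j').val < k ∨ (s j').val + n - (s j).val < k := by
    intro j j' hle
    rcases hp j j' with h | h
    · left
      rwa [hcast j, hcast j', val_sub_cast _ _ (hvlt j) (hvlt j') hle] at h
    · rcases eq_or_lt_of_le hle with he | hlt
      · left; omega
      · right
        rwa [hcast j', hcast j, val_sub_cast' _ _ (hvlt j') (hvlt j) hlt] at h
  set φ : Fin k → ℕ := fun j => if (s j).val < k then (s j).val else (s j).val - (n - k)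
    with hφ
  have φ_lt : ∀ j, φ j < k := by
    intro j
    rcases hval j with h | h
    · simp only [hφ, if_pos h]; exact h
    · have := hvlt j
      simp only [hφ, if_neg (by omega : ¬ (s j).val < k)]
      omega
  have φlow : ∀ j, (s j).val < k → φ j = (s j).val := by
    intro j h; simp only [hφ, if_pos h]
  have φhigh : ∀ j, ¬ (s j).val < k → (s j).val = φ j + (n - k) := by
    intro j h
    have := hval j
    simp only [hφ, if_neg h]
    omega
  have φinj : Function.Injective φ := by
    intro j j' h
    by_cases h1 : (s j).val < k <;> by_cases h2 : (s j').val < k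
    · exact hvinj _ _ (by rw [← φlow j h1, ← φlow j' h2, h])
    · -- j low, j' high
      exfalso
      have e2 := φhigh j' h2
      have e1 := φlow j h1
      have hle : (s j).val ≤ (s j').val := by omega
      have := hpn j' j hle
      omega
    · exfalso
      have e2 := φhigh j h1
      have e1 := φlow j' h2
      have hle : (s j').val ≤ (s j).val := by omega
      have := hpn j j' hle
      omega
    · have e1 := φhigh j h1
      have e2 := φhigh j' h2
      exact hvinj _ _ (by omega)
  have hsurj : ∀ p, p < k → ∃ j, φ j = p := by
    have himg : Finset.image φ Finset.univ = Finset.range k := by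
      apply Finset.eq_of_subset_of_card_le
      · intro p hp'
        simp only [Finset.mem_image, Finset.mem_univ, true_and] at hp'
        obtain ⟨j, rfl⟩ := hp'
        exact Finset.mem_range.mpr (φ_lt j)
      · rw [Finset.card_range, Finset.card_image_of_injective _ φinj, Finset.card_univ,
          Fintype.card_fin]
    intro p hp'
    have : p ∈ Finset.image φ Finset.univ := himg ▸ Finset.mem_range.mpr hp'
    simpa using this
  have hLH : ∀ p, (∃ j, (s j).val < k ∧ φ j = p) → (∃ j, ¬ (s j).val < k ∧ φ j = p) → False := by
    rintro p ⟨j, hj, hjp⟩ ⟨j', hj', hjp'⟩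
    have : j = j' := φinj (by rw [hjp, hjp'])
    subst this
    exact hj' hj
  have hmono : ∀ p, p + 1 < k → (∃ j, ¬ (s j).val < k ∧ φ j = p) →
      ∃ j, ¬ (s j).val < k ∧ φ j = p + 1 := by
    rintro p hpk ⟨j, hj, hφj⟩
    obtain ⟨j', hφj'⟩ := hsurj (p + 1) hpk
    refine ⟨j', ?_, hφj'⟩
    intro hlow
    have e1 := φhigh j hj
    have e2 := φlow j' hlow
    have hle : (s j').val ≤ (s j).val := by omega
    have := hpn j j' hle
    omega
  by_cases hex : ∃ p, (∃ j, ¬ (s j).val < k ∧ φ j = p) ∧ p < k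
  · -- there is a "high" class
    set p0 := Nat.find hex with hp0
    have hP : (∃ j, ¬ (s j).val < k ∧ φ j = p0) ∧ p0 < k := Nat.find_spec hex
    have H1 : ∀ p, p < p0 → ∃ j, (s j).val < k ∧ φ j = p := by
      intro p hpp
      have hpk : p < k := lt_trans hpp hP.2
      obtain ⟨j, hj⟩ := hsurj p hpk
      by_cases hl : (s j).val < k
      · exact ⟨j, hl, hj⟩
      · exact absurd ⟨⟨j, hl, hj⟩, hpk⟩ (Nat.find_min hex hpp)
    have H2 : ∀ p, p0 ≤ p → p < k → ∃ j, ¬ (s j).val < k ∧ φ j = p := by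
      intro p hp
      induction p, hp using Nat.le_induction with
      | base => intro _; exact hP.1
      | succ p hp ih => intro h; exact hmono p h (ih (by omega))
    set b := p0 + (n - k) with hb
    have hp0k : p0 < k := hP.2
    have hbn : b < n := by omega
    refine ⟨(b : ZMod n), fun c => ?_⟩
    have hcn : c.val < n := ZMod.val_lt c
    have hc : c = ((c.val : ℕ) : ZMod n) := (ZMod.natCast_rightInverse c).symm
    constructor
    · intro hlt
      by_cases hab : b ≤ c.val
      · rw [hc, val_sub_cast _ _ hcn hbn hab] at hlt
        have hpk : c.val - (n - k) < k := by omega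
        have hge : p0 ≤ c.val - (n - k) := by omega
        obtain ⟨j, hjh, hjφ⟩ := H2 _ hge hpk
        have e := φhigh j hjh
        refine ⟨j, ?_⟩
        rw [hcast j, show (s j).val = c.val by omega, ← hc]
      · push_neg at hab
        rw [hc, val_sub_cast' _ _ hcn hbn hab] at hlt
        have hcp : c.val < p0 := by omega
        obtain ⟨j, hjl, hjφ⟩ := H1 _ hcp
        have e := φlow j hjl
        refine ⟨j, ?_⟩
        rw [hcast j, show (s j).val = c.val by omega, ← hc]
    · rintro ⟨j, rfl⟩
      by_cases hjl : (s j).val < k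
      · have e := φlow j hjl
        have hLp : (s j).val < p0 := by
          by_contra h
          push_neg at h
          exact hLH _ ⟨j, hjl, rfl⟩ (H2 _ (by omega) (by omega))
        rw [hcast j, val_sub_cast' _ _ (hvlt j) hbn (by omega)]
        omega
      · have e := φhigh j hjl
        have hfl := φ_lt j
        have hHp : p0 ≤ φ j := by
          by_contra h
          push_neg at h
          exact hLH _ (H1 _ h) ⟨j, hjl, rfl⟩
        rw [hcast j, val_sub_cast _ _ (hvlt j) hbn (by omega)]
        omega
  · -- everything is "low"
    have H1 : ∀ p, p < k → ∃ j, (s j).val < k ∧ φ j = p := by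
      intro p hpk
      obtain ⟨j, hj⟩ := hsurj p hpk
      by_cases hl : (s j).val < k
      · exact ⟨j, hl, hj⟩
      · exact absurd ⟨p, ⟨j, hl, hj⟩, hpk⟩ hex
    refine ⟨0, fun c => ?_⟩
    rw [sub_zero]
    constructor
    · intro h
      obtain ⟨j, hjl, hjφ⟩ := H1 c.val h
      have e := φlow j hjl
      exact ⟨j, by rw [hcast j, show (s j).val = c.val by omega, ZMod.natCast_rightInverse]⟩
    · rintro ⟨j, rfl⟩
      by_cases hjl : (s j).val < k
      · exact hjl
      · exact absurd ⟨φ j, ⟨j, hjl, rfl⟩, φ_lt j⟩ hex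

lemma core (n k : ℕ) (hk : 0 < k) (hn : 2 * k < n) (s : Fin k → ZMod n)
    (hs : Function.Injective s)
    (hp : ∀ j j', (s j - s j').val < k ∨ (s j' - s j).val < k) :
    ∃ m : ZMod n, ∀ c : ZMod n, (c - m).val < k ↔ ∃ j, s j = c := by
  obtain ⟨m, hm⟩ := core0 n k hk hn (fun j => s j - s ⟨0, hk⟩)
    (fun j j' h => hs (by simpa [sub_left_inj] using h)) (sub_self _)
    (by intro j j'; simpa [sub_sub_sub_cancel_right] using hp j j')
  refine ⟨m + s ⟨0, hk⟩, fun c => ?_⟩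
  have h := hm (c - s ⟨0, hk⟩)
  rw [sub_sub, add_comm (s ⟨0, hk⟩) m] at h
  simpa [sub_left_inj] using h

lemma mem_interval {n k : ℕ} [NeZero n] (hk : k < n) (π : ZMod n ≃ Fin n)
    (i : ZMod n) (I : Finset (Fin n)) (h : IsIntervalFrom n π i k I) (x : Fin n) :
    x ∈ I ↔ (π.symm x - i).val < k := by
  rw [show I = _ from h]
  simp only [Finset.mem_image, Finset.mem_univ, true_and]
  constructor
  · rintro ⟨t, rfl⟩
    rw [Equiv.symm_apply_apply, add_sub_cancel_left, ZMod.val_natCast,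
      Nat.mod_eq_of_lt (lt_trans t.2 hk)]
    exact t.2
  · intro hv
    refine ⟨⟨(π.symm x - i).val, hv⟩, ?_⟩
    have : i + (((π.symm x - i).val : ℕ) : ZMod n) = π.symm x := by
      rw [ZMod.natCast_rightInverse]; ring
    rw [this, Equiv.apply_symm_apply]

/-- uniqueness in Katona's lemma: if `n > 2k` and `G 1, …, G k` are `k`
distinct pairwise-intersecting `k`-intervals of a cyclic permutation `π` of `[n]`, then
there is an element `x` such that `G 1, …, G k` are exactly all the `k`-intervals of `π`
containing `x`. -/
theorem stmt9 (n k : ℕ) (hn : 2 * k < n) (π : ZMod n ≃ Fin n)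
    (G : Fin k → Finset (Fin n)) (hinj : Function.Injective G)
    (hintv : ∀ j, ∃ i, IsIntervalFrom n π i k (G j))
    (hint : ∀ j j', (G j ∩ G j').Nonempty) :
    ∃ x : Fin n, ∀ I : Finset (Fin n),
      ((∃ i, IsIntervalFrom n π i k I) ∧ x ∈ I) ↔ ∃ j, G j = I := by
  haveI : NeZero n := ⟨by omega⟩
  rcases Nat.eq_zero_or_pos k with hk0 | hk
  · subst hk0
    refine ⟨⟨0, by omega⟩, fun I => ?_⟩
    constructor
    · rintro ⟨⟨i, hI⟩, hx⟩
      rw [show I = _ from hI] at hx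
      simp at hx
    · rintro ⟨j, _⟩
      exact j.elim0
  · have hkn : k < n := by omega
    choose ss hss using hintv
    have hmem : ∀ j x, x ∈ G j ↔ (π.symm x - ss j).val < k :=
      fun j x => mem_interval hkn π _ _ (hss j) x
    have hsinj : Function.Injective ss := by
      intro j j' h
      apply hinj
      rw [show G j = _ from hss j, show G j' = _ from hss j', h]
    have hpair : ∀ j j', (ss j - ss j').val < k ∨ (ss j' - ss j).val < k := by
      intro j j'
      obtain ⟨x, hx⟩ := hint j j'
      rw [Finset.mem_inter] at hx
      have h1 := (hmem j x).mp hx.1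
      have h2 := (hmem j' x).mp hx.2
      have ha : π.symm x - ss j = (((π.symm x - ss j).val : ℕ) : ZMod n) :=
        (ZMod.natCast_rightInverse _).symm
      have hb : π.symm x - ss j' = (((π.symm x - ss j').val : ℕ) : ZMod n) :=
        (ZMod.natCast_rightInverse _).symm
      have hvn1 : (π.symm x - ss j).val < n := ZMod.val_lt _
      have hvn2 : (π.symm x - ss j').val < n := ZMod.val_lt _
      by_cases hc : (π.symm x - ss j').val ≤ (π.symm x - ss j).val
      · right
        have : ss j' - ss j = (π.symm x - ss j) - (π.symm x - ss j') := by ring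
        rw [this, ha, hb, val_sub_cast _ _ hvn1 hvn2 hc]
        omega
      · left
        push_neg at hc
        have : ss j - ss j' = (π.symm x - ss j') - (π.symm x - ss j) := by ring
        rw [this, hb, ha, val_sub_cast _ _ hvn2 hvn1 hc.le]
        omega
    obtain ⟨m, hm⟩ := core n k hk hn ss hsinj hpair
    have hk1 : k - 1 < n := by omega
    refine ⟨π (m + ((k - 1 : ℕ) : ZMod n)), fun I => ?_⟩
    have key : ∀ i : ZMod n,
        (π.symm (π (m + ((k - 1 : ℕ) : ZMod n))) - i).val < k ↔ (i - m).val < k := by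
      intro i
      rw [Equiv.symm_apply_apply]
      set d := (i - m).val with hd
      have hdn : d < n := ZMod.val_lt _
      have hi : i = m + ((d : ℕ) : ZMod n) := by
        rw [hd, ZMod.natCast_rightInverse]; ring
      have he : m + ((k - 1 : ℕ) : ZMod n) - i = ((k - 1 : ℕ) : ZMod n) - ((d : ℕ) : ZMod n) := by
        rw [hi]; ring
      rw [he]
      by_cases hcase : d ≤ k - 1
      · rw [val_sub_cast _ _ hk1 hdn hcase]; omega
      · push_neg at hcase
        rw [val_sub_cast' _ _ hk1 hdn hcase]; omega
    constructor
    · rintro ⟨⟨i, hI⟩, hx⟩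
      have h1 : (i - m).val < k :=
        (key i).mp ((mem_interval hkn π i I hI _).mp hx)
      obtain ⟨j, hj⟩ := (hm i).mp h1
      exact ⟨j, by rw [show G j = _ from hss j, hj, ← show I = _ from hI]⟩
    · rintro ⟨j, rfl⟩
      refine ⟨⟨ss j, hss j⟩, ?_⟩
      rw [hmem j]
      exact (key (ss j)).mpr ((hm (ss j)).mpr ⟨j, rfl⟩)
end

section
/- Let k ≥ l ≥ 1, n > k+l, and let A ⊆ ([n] choose k), B ⊆ ([n] choose l) be cross-intersecting families. Suppose that for every cyclic permutation π of [n] there exists an element x (depending on π) such that the members of A that are intervals of π are exactly all k-intervals of π containing x, and the members of B that are intervals of π are exactly all l-intervals of π containing x. Then there exists y ∈ [n] such that A is the family of all k-subsets of [n] containing y and B is the family of all l-subsets containing y. -/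
set_option linter.unusedSectionVars false

open Finset

section Prelim
variable {n : ℕ} [NeZero n]

/-- the canonical equivalence `ZMod n ≃ Fin n`. -/
def zmodFin : ZMod n ≃ Fin n where
  toFun z := ⟨z.val, ZMod.val_lt z⟩
  invFun j := ((j : ℕ) : ZMod n)
  left_inv z := ZMod.natCast_rightInverse z
  right_inv j := by
    ext
    exact ZMod.val_cast_of_lt j.isLt

lemma zmodFin_cast (c : ℕ) (hc : c < n) : (zmodFin ((c : ZMod n)) : Fin n) = ⟨c, hc⟩ := by
  ext
  exact ZMod.val_cast_of_lt hc

/-- extend a partial enumeration to a full cyclic permutation. -/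
lemma ext_perm (f : ℕ → Fin n) (M : ℕ) (hM : M ≤ n)
    (hf : ∀ a < M, ∀ b < M, f a = f b → a = b) :
    ∃ σ : ZMod n ≃ Fin n, ∀ j, j < M → σ ((j : ZMod n)) = f j := by
  classical
  set A : Finset (Fin n) := (Finset.range M).image (fun j => f j) with hA
  have hcardA : A.card = M := by
    rw [hA, Finset.card_image_of_injOn, Finset.card_range]
    intro a ha b hb hab
    exact hf a (Finset.mem_range.1 ha) b (Finset.mem_range.1 hb) hab
  set T : Finset (Fin n) := univ \ A with hT
  have hcardT : T.card = n - M := by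
    rw [hT, Finset.card_sdiff_of_subset (Finset.subset_univ A), Finset.card_univ, Fintype.card_fin, hcardA]
  let g : Fin (n - M) ≃o T := T.orderIsoOfFin hcardT
  let F : Fin n → Fin n := fun j =>
    if h : (j : ℕ) < M then f j else (g ⟨(j : ℕ) - M, by omega⟩ : Fin n)
  have hginj : ∀ a b, (g a : Fin n) = (g b : Fin n) → a = b := by
    intro a b hab
    have := g.injective (Subtype.ext hab)
    exact this
  have hFinj : Function.Injective F := by
    intro a b hab
    by_cases ha : (a : ℕ) < M <;> by_cases hb : (b : ℕ) < M
    · simp only [F, dif_pos ha, dif_pos hb] at hab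
      exact Fin.ext (hf a ha b hb hab)
    · exfalso
      simp only [F, dif_pos ha, dif_neg hb] at hab
      have h1 : f a ∈ A := by
        rw [hA]; exact Finset.mem_image.2 ⟨a, Finset.mem_range.2 ha, rfl⟩
      have h2 : (g ⟨(b : ℕ) - M, by omega⟩ : Fin n) ∈ T := Finset.coe_mem _
      simp only [hT, Finset.mem_sdiff] at h2
      exact h2.2 (hab ▸ h1)
    · exfalso
      simp only [F, dif_neg ha, dif_pos hb] at hab
      have h1 : f b ∈ A := by
        rw [hA]; exact Finset.mem_image.2 ⟨b, Finset.mem_range.2 hb, rfl⟩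
      have h2 : (g ⟨(a : ℕ) - M, by omega⟩ : Fin n) ∈ T := Finset.coe_mem _
      simp only [hT, Finset.mem_sdiff] at h2
      exact h2.2 (hab ▸ h1)
    · simp only [F, dif_neg ha, dif_neg hb] at hab
      have := hginj _ _ hab
      have : (a : ℕ) - M = (b : ℕ) - M := congrArg (fun x => (x : Fin (n - M)).val) this
      exact Fin.ext (by omega)
  have hFbij : Function.Bijective F := (Finite.injective_iff_bijective).1 hFinj
  refine ⟨zmodFin.trans (Equiv.ofBijective F hFbij), ?_⟩
  intro j hj
  have : zmodFin ((j : ZMod n)) = ⟨j, lt_of_lt_of_le hj hM⟩ := zmodFin_cast j (lt_of_lt_of_le hj hM)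
  simp only [Equiv.trans_apply, this, Equiv.ofBijective_apply]
  simp only [F, dif_pos hj]

end Prelim

section Main
variable {n : ℕ} [NeZero n]

lemma val_neg' {z : ZMod n} (hz : z ≠ 0) : (-z).val = n - z.val := by
  have h1 : z.val ≠ 0 := fun h => hz ((ZMod.val_eq_zero z).1 h)
  have h2 : z.val < n := ZMod.val_lt z
  have h3 : ((n - z.val : ℕ) : ZMod n) = -z := by
    have : (((n - z.val) + z.val : ℕ) : ZMod n) = 0 := by
      rw [Nat.sub_add_cancel h2.le]; exact ZMod.natCast_self n
    push_cast at this
    rw [ZMod.natCast_rightInverse z] at this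
    linear_combination this
  rw [← h3, ZMod.val_cast_of_lt (by omega)]

def Wnd (π : ZMod n ≃ Fin n) (i : ZMod n) (m : ℕ) : Finset (Fin n) :=
  Finset.image (fun t : Fin m => π (i + ((t : ℕ) : ZMod n))) Finset.univ

lemma interval_iff (π : ZMod n ≃ Fin n) (i : ZMod n) (m : ℕ) (I : Finset (Fin n)) :
    IsIntervalFrom n π i m I ↔ I = Wnd π i m := Iff.rfl

lemma mem_wnd (π : ZMod n ≃ Fin n) (i : ZMod n) {m : ℕ} (hm : m ≤ n) (y : Fin n) :
    y ∈ Wnd π i m ↔ ((π.symm y : ZMod n) - i).val < m := by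
  simp only [Wnd, Finset.mem_image, Finset.mem_univ, true_and]
  constructor
  · rintro ⟨t, rfl⟩
    rw [Equiv.symm_apply_apply]
    have h : (i + ((t : ℕ) : ZMod n)) - i = (((t : ℕ) : ℕ) : ZMod n) := by ring
    rw [h, ZMod.val_cast_of_lt (lt_of_lt_of_le t.isLt hm)]
    exact t.isLt
  · intro h
    refine ⟨⟨(π.symm y - i).val, h⟩, ?_⟩
    have h2 : (((π.symm y - i).val : ℕ) : ZMod n) = π.symm y - i := ZMod.natCast_rightInverse _
    show π (i + _) = y
    rw [h2]
    rw [show i + (π.symm y - i) = π.symm y by ring, Equiv.apply_symm_apply]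

variable (𝒢 : Finset (Finset (Fin n))) (m : ℕ)

def CenterOf (π : ZMod n ≃ Fin n) (x : Fin n) : Prop :=
  ∀ I, (∃ i, IsIntervalFrom n π i m I) → (I ∈ 𝒢 ↔ x ∈ I)

lemma centerOf_wnd {π : ZMod n ≃ Fin n} {x : Fin n} (hc : CenterOf 𝒢 m π x) (i : ZMod n) :
    Wnd π i m ∈ 𝒢 ↔ x ∈ Wnd π i m := hc _ ⟨i, rfl⟩

lemma centerOf_unique (h1 : 1 ≤ m) (h2 : 2 * m < n) {π : ZMod n ≃ Fin n} {x x' : Fin n}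
    (hx : CenterOf 𝒢 m π x) (hx' : CenterOf 𝒢 m π x') : x = x' := by
  by_contra hne
  have hmn : m ≤ n := by omega
  set p : ZMod n := π.symm x with hp
  set p' : ZMod n := π.symm x' with hp'
  have hpp : p' - p ≠ 0 := by
    intro h
    apply hne
    have : p = p' := by linear_combination -h
    exact π.symm.injective this
  have he : (p' - p).val ≠ 0 := fun h => hpp ((ZMod.val_eq_zero _).1 h)
  have helt : (p' - p).val < n := ZMod.val_lt _
  by_cases hcase : (p' - p).val < m
  · -- window at p' contains x' but not x
    have hxin : x' ∈ Wnd π p' m := by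
      rw [mem_wnd π p' hmn, ← hp', sub_self, ZMod.val_zero]; omega
    have hxout : x ∉ Wnd π p' m := by
      rw [mem_wnd π p' hmn, ← hp]
      have : p - p' = -(p' - p) := by ring
      rw [this, val_neg' hpp]
      omega
    have := (centerOf_wnd 𝒢 m hx p').symm.trans (centerOf_wnd 𝒢 m hx' p')
    simp [hxin, hxout] at this
  · -- window at p contains x but not x'
    have hxin : x ∈ Wnd π p m := by
      rw [mem_wnd π p hmn, ← hp, sub_self, ZMod.val_zero]; omega
    have hxout : x' ∉ Wnd π p m := by
      rw [mem_wnd π p hmn, ← hp']; omega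
    have := (centerOf_wnd 𝒢 m hx p).symm.trans (centerOf_wnd 𝒢 m hx' p)
    simp [hxin, hxout] at this

end Main

section Helper
variable {n : ℕ} [NeZero n]

def Wf (f : ℕ → Fin n) (m a : ℕ) : Finset (Fin n) :=
  Finset.image (fun t : Fin m => f (a + (t : ℕ))) Finset.univ

lemma wnd_ext_perm {f : ℕ → Fin n} {M : ℕ} {σ : ZMod n ≃ Fin n}
    (hσ : ∀ j, j < M → σ ((j : ZMod n)) = f j) {a m : ℕ} (ham : a + m ≤ M) :
    Wnd σ ((a : ℕ) : ZMod n) m = Wf f m a := by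
  refine Finset.image_congr ?_
  intro t _
  show σ ((a : ZMod n) + ((t : ℕ) : ZMod n)) = f (a + (t : ℕ))
  have h1 : ((a : ZMod n)) + ((t : ℕ) : ZMod n) = (((a + (t : ℕ)) : ℕ) : ZMod n) := by push_cast; ring
  rw [h1]
  exact hσ _ (by omega)

variable (𝒢 : Finset (Finset (Fin n))) (m : ℕ)

lemma helper (h2 : 2 * m < n)
    (hc : ∀ τ : ZMod n ≃ Fin n, ∃ z, CenterOf 𝒢 m τ z)
    (f : ℕ → Fin n) (hf : ∀ a < 2 * m, ∀ b < 2 * m, f a = f b → a = b)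
    (r : ℕ) (hr : r + m ≤ 2 * m)
    (hS : Wf f m 0 ∉ 𝒢) (hN : Wf f m m ∉ 𝒢) (hB : Wf f m r ∈ 𝒢) : False := by
  obtain ⟨σ, hσ⟩ := ext_perm f (2 * m) (by omega) hf
  obtain ⟨z, hz⟩ := hc σ
  have hW0 : Wnd σ ((0 : ℕ) : ZMod n) m = Wf f m 0 := wnd_ext_perm hσ (by omega)
  have hWm : Wnd σ ((m : ℕ) : ZMod n) m = Wf f m m := wnd_ext_perm hσ (by omega)
  have hWr : Wnd σ ((r : ℕ) : ZMod n) m = Wf f m r := wnd_ext_perm hσ hr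
  have hzin : z ∈ Wf f m r := by
    have := hz (Wf f m r) ⟨((r : ℕ) : ZMod n), by rw [interval_iff, hWr]⟩
    exact this.1 hB
  have hz0 : z ∉ Wf f m 0 := by
    have := hz (Wf f m 0) ⟨((0 : ℕ) : ZMod n), by rw [interval_iff, hW0]⟩
    exact fun h => hS (this.2 h)
  have hzm : z ∉ Wf f m m := by
    have := hz (Wf f m m) ⟨((m : ℕ) : ZMod n), by rw [interval_iff, hWm]⟩
    exact fun h => hN (this.2 h)
  simp only [Wf, Finset.mem_image, Finset.mem_univ, true_and] at hzin hz0 hzm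
  obtain ⟨t, ht⟩ := hzin
  by_cases hcase : r + (t : ℕ) < m
  · refine hz0 ⟨⟨r + (t : ℕ), hcase⟩, ?_⟩
    simpa using ht
  · refine hzm ⟨⟨r + (t : ℕ) - m, by omega⟩, ?_⟩
    simp only []
    rw [show m + (r + (t : ℕ) - m) = r + (t : ℕ) by omega]
    exact ht
end Helper

section Arith
variable {n : ℕ} [NeZero n]

lemma pigeon3 {α : Type} {a b c u v : α} (hab : a ≠ b) (hac : a ≠ c) (hbc : b ≠ c)
    (ha : a = u ∨ a = v) (hb : b = u ∨ b = v) (hc : c = u ∨ c = v) : False := by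
  rcases ha with rfl | rfl <;> rcases hb with rfl | rfl <;> rcases hc with rfl | rfl <;> tauto

lemma cast_ne_zero' {c : ℕ} (h0 : 0 < c) (hn : c < n) : ((c : ℕ) : ZMod n) ≠ 0 := by
  intro h
  have := congrArg ZMod.val h
  rw [ZMod.val_cast_of_lt hn, ZMod.val_zero] at this
  omega

lemma caseB {m : ℕ} (h1 : 1 ≤ m) (h2 : 2 * m < n) (p q i : ZMod n)
    (d : ℕ) (hd : ((d : ℕ) : ZMod n) = q - p) (hd1 : 1 ≤ d) (hdm : d < m)
    (H : ∀ s : ZMod n, s ≠ i + 1 → s ≠ i + 1 - ((m : ℕ) : ZMod n) →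
      ((p - s).val < m ↔ (q - s).val < m)) :
    p = i ∧ q = i + 1 := by
  have hq : q = p + ((d : ℕ) : ZMod n) := by linear_combination -hd
  have hΔ : ∀ s : ZMod n, ¬ ((p - s).val < m ↔ (q - s).val < m) →
      s = i + 1 ∨ s = i + 1 - ((m : ℕ) : ZMod n) := by
    intro s hs
    by_contra hcon
    push_neg at hcon
    exact hs (H s hcon.1 hcon.2)
  -- element q
  have hqΔ : q = i + 1 ∨ q = i + 1 - ((m : ℕ) : ZMod n) := by
    apply hΔ
    intro hiff
    have e1 : (q - q).val = 0 := by rw [sub_self, ZMod.val_zero]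
    have e3 : (p - q).val = n - d := by
      rw [show p - q = -((d:ℕ) : ZMod n) by rw [hq]; ring,
        val_neg' (cast_ne_zero' (by omega) (by omega)), ZMod.val_cast_of_lt (by omega)]
    rw [e1, e3] at hiff
    omega
  -- element γ = p - (m-1)
  set γ : ZMod n := p - (((m - 1 : ℕ) : ℕ) : ZMod n) with hγ
  have hγdef : p = γ + (((m - 1 : ℕ) : ℕ) : ZMod n) := by rw [hγ]; ring
  have hγq : (q - γ) = (((d + (m - 1) : ℕ) : ℕ) : ZMod n) := by
    rw [hγ, hq]; push_cast; ring
  have hγΔ : γ = i + 1 ∨ γ = i + 1 - ((m : ℕ) : ZMod n) := by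
    apply hΔ
    intro hiff
    have e1 : (p - γ).val = m - 1 := by
      rw [show p - γ = (((m - 1 : ℕ) : ℕ) : ZMod n) by rw [hγ]; ring,
        ZMod.val_cast_of_lt (by omega)]
    have e2 : (q - γ).val = d + (m - 1) := by rw [hγq, ZMod.val_cast_of_lt (by omega)]
    rw [e1, e2] at hiff
    omega
  have hqγ : q ≠ γ := by
    intro h
    have : (q - γ) = 0 := by rw [h, sub_self]
    rw [hγq] at this
    exact cast_ne_zero' (by omega) (by omega) this
  have hmm1 : ((m : ℕ) : ZMod n) = (((m - 1 : ℕ) : ℕ) : ZMod n) + 1 := by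
    push_cast [Nat.cast_sub (by omega : 1 ≤ m)]; ring
  by_cases hd2 : 2 ≤ d
  · -- three distinct Δ elements: contradiction
    exfalso
    have hpΔ : p + 1 = i + 1 ∨ p + 1 = i + 1 - ((m : ℕ) : ZMod n) := by
      apply hΔ
      intro hiff
      have e3 : (p - (p + 1)).val = n - 1 := by
        rw [show p - (p + 1) = -(((1 : ℕ) : ℕ) : ZMod n) by push_cast; ring,
          val_neg' (cast_ne_zero' (by omega) (by omega)), ZMod.val_cast_of_lt (by omega)]
      have e5 : (q - (p + 1)).val = d - 1 := by
        rw [show q - (p + 1) = (((d - 1 : ℕ) : ℕ) : ZMod n) by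
            rw [hq]; push_cast [Nat.cast_sub hd1]; ring,
          ZMod.val_cast_of_lt (by omega)]
      rw [e3, e5] at hiff
      omega
    have hqp1 : q ≠ p + 1 := by
      intro h
      have : (q - (p + 1)) = 0 := by rw [h, sub_self]
      rw [show q - (p + 1) = (((d - 1 : ℕ) : ℕ) : ZMod n) by
          rw [hq]; push_cast [Nat.cast_sub hd1]; ring] at this
      exact cast_ne_zero' (by omega) (by omega) this
    have hγp1 : γ ≠ p + 1 := by
      intro h
      have : (p + 1 - γ) = 0 := by rw [← h, sub_self]
      rw [show p + 1 - γ = ((m : ℕ) : ZMod n) by rw [hγ, hmm1]; ring] at this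
      exact cast_ne_zero' (by omega) (by omega) this
    exact pigeon3 hqγ hqp1 hγp1 hqΔ hγΔ hpΔ
  · -- d = 1
    have hd1' : d = 1 := by omega
    have hq1 : q = p + 1 := by rw [hq, hd1']; push_cast; ring
    rcases hqΔ with h | h
    · rcases hγΔ with h' | h'
      · exact absurd (h.trans h'.symm) hqγ
      · refine ⟨?_, h⟩
        rw [hγdef, h', hmm1]
        ring
    · exfalso
      rcases hγΔ with h' | h'
      · have e1 := hq1
        rw [h, hγdef, h'] at e1
        have : ((2 * m : ℕ) : ZMod n) = 0 := by
          push_cast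
          have e2 := hmm1
          push_cast [Nat.cast_sub (by omega : 1 ≤ m)] at e1 e2 ⊢
          linear_combination e2 - e1
        exact cast_ne_zero' (by omega) (by omega) this
      · exact absurd (h.trans h'.symm) hqγ

lemma lem_arith {m : ℕ} (h1 : 1 ≤ m) (h2 : 2 * m < n) (p q i : ZMod n) (hpq : p ≠ q)
    (H : ∀ s : ZMod n, s ≠ i + 1 → s ≠ i + 1 - ((m : ℕ) : ZMod n) →
      ((p - s).val < m ↔ (q - s).val < m)) :
    (p = i ∧ q = i + 1) ∨ (p = i + 1 ∧ q = i) := by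
  have hΔ : ∀ s : ZMod n, ¬ ((p - s).val < m ↔ (q - s).val < m) →
      s = i + 1 ∨ s = i + 1 - ((m : ℕ) : ZMod n) := by
    intro s hs
    by_contra hcon
    push_neg at hcon
    exact hs (H s hcon.1 hcon.2)
  have hne : q - p ≠ 0 := fun h => hpq (by linear_combination -h)
  have hd1 : 1 ≤ (q - p).val := by
    rcases Nat.eq_zero_or_pos (q - p).val with h | h
    · exact absurd ((ZMod.val_eq_zero _).1 h) hne
    · exact h
  have hdn : (q - p).val < n := ZMod.val_lt _
  have hd : (((q - p).val : ℕ) : ZMod n) = q - p := ZMod.natCast_rightInverse _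
  have hnd : ((n - (q - p).val : ℕ) : ZMod n) = p - q := by
    calc ((n - (q - p).val : ℕ) : ZMod n) = (((-(q - p)).val : ℕ) : ZMod n) := by
          rw [val_neg' hne]
      _ = -(q - p) := ZMod.natCast_rightInverse _
      _ = p - q := by ring
  by_cases hcase1 : (q - p).val < m
  · exact Or.inl (caseB h1 h2 p q i (q - p).val hd hd1 hcase1 H)
  · by_cases hcase2 : n - (q - p).val < m
    · refine Or.inr ?_
      have := caseB h1 h2 q p i (n - (q - p).val) hnd (by omega) hcase2
        (fun s hs1 hs2 => (H s hs1 hs2).symm)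
      exact ⟨this.2, this.1⟩
    · -- case A : both distances at least m
      have hpΔ : p = i + 1 ∨ p = i + 1 - ((m : ℕ) : ZMod n) := by
        apply hΔ
        intro hiff
        have e1 : (p - p).val = 0 := by rw [sub_self, ZMod.val_zero]
        rw [e1] at hiff
        exact hcase1 (hiff.1 (by omega))
      have hqΔ : q = i + 1 ∨ q = i + 1 - ((m : ℕ) : ZMod n) := by
        apply hΔ
        intro hiff
        have e1 : (q - q).val = 0 := by rw [sub_self, ZMod.val_zero]
        have e2 : (p - q).val = n - (q - p).val := by
          rw [← hnd, ZMod.val_cast_of_lt (by omega)]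
        rw [e1, e2] at hiff
        omega
      by_cases hm1 : m = 1
      · have him : i + 1 - ((m : ℕ) : ZMod n) = i := by rw [hm1]; push_cast; ring
        rw [him] at hpΔ hqΔ
        rcases hpΔ with h | h <;> rcases hqΔ with h' | h' <;>
          first
            | (exact absurd (h.trans h'.symm) hpq)
            | (exact Or.inl ⟨h, h'⟩)
            | (exact Or.inr ⟨h, h'⟩)
      · exfalso
        set γ : ZMod n := p - (((m - 1 : ℕ) : ℕ) : ZMod n) with hγ
        have hγq : (q - γ) = ((((q - p).val + (m - 1) : ℕ) : ℕ) : ZMod n) := by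
          rw [hγ, Nat.cast_add, hd]
          ring
        have hγΔ : γ = i + 1 ∨ γ = i + 1 - ((m : ℕ) : ZMod n) := by
          apply hΔ
          intro hiff
          have e1 : (p - γ).val = m - 1 := by
            rw [show p - γ = (((m - 1 : ℕ) : ℕ) : ZMod n) by rw [hγ]; ring,
              ZMod.val_cast_of_lt (by omega)]
          have e2 : (q - γ).val = (q - p).val + (m - 1) := by
            rw [hγq, ZMod.val_cast_of_lt (by omega)]
          rw [e1, e2] at hiff
          omega
        have hpγ : p ≠ γ := by
          intro h
          have : (p - γ) = 0 := by rw [h, sub_self]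
          rw [show p - γ = (((m - 1 : ℕ) : ℕ) : ZMod n) by rw [hγ]; ring] at this
          exact cast_ne_zero' (by omega) (by omega) this
        have hqγ : q ≠ γ := by
          intro h
          have : (q - γ) = 0 := by rw [h, sub_self]
          rw [hγq] at this
          exact cast_ne_zero' (by omega) (by omega) this
        exact pigeon3 hpq hpγ hqγ hpΔ hqΔ hγΔ

end Arith

section Adj
variable {n : ℕ} [NeZero n]

lemma cast_inj' {a b : ℕ} (ha : a < n) (hb : b < n) (h : ((a : ℕ) : ZMod n) = ((b : ℕ) : ZMod n)) :
    a = b := by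
  have := congrArg ZMod.val h
  rwa [ZMod.val_cast_of_lt ha, ZMod.val_cast_of_lt hb] at this

/-- non-split windows have the same membership behaviour at `i` and `i+1`. -/
lemma nonsplit {m : ℕ} (h1 : 1 ≤ m) (h2 : 2 * m < n) (i s : ZMod n)
    (hs1 : s ≠ i + 1) (hs2 : s ≠ i + 1 - ((m : ℕ) : ZMod n)) :
    ((i - s).val < m ↔ (i + 1 - s).val < m) := by
  have hmm1 : ((m : ℕ) : ZMod n) = (((m - 1 : ℕ) : ℕ) : ZMod n) + 1 := by
    push_cast [Nat.cast_sub (by omega : 1 ≤ m)]; ring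
  set e : ℕ := (i - s).val with he
  have hecast : ((e : ℕ) : ZMod n) = i - s := ZMod.natCast_rightInverse _
  have hen : e < n := ZMod.val_lt _
  have hene : e ≠ n - 1 := by
    intro h
    apply hs1
    have : i - s = ((n - 1 : ℕ) : ZMod n) := by rw [← hecast, h]
    have h0 : ((n : ℕ) : ZMod n) = 0 := ZMod.natCast_self n
    have hn1 : ((n - 1 : ℕ) : ZMod n) = -1 := by
      push_cast [Nat.cast_sub (by omega : 1 ≤ n)]
      rw [h0]; ring
    rw [hn1] at this
    linear_combination -this
  have henm : e ≠ m - 1 := by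
    intro h
    apply hs2
    have : i - s = (((m - 1 : ℕ) : ℕ) : ZMod n) := by rw [← hecast, h]
    linear_combination -this + hmm1
  have hval : (i + 1 - s).val = e + 1 := by
    have : i + 1 - s = (((e + 1 : ℕ) : ℕ) : ZMod n) := by
      push_cast
      rw [hecast]; ring
    rw [this, ZMod.val_cast_of_lt (by omega)]
  rw [hval]
  omega

variable (𝒢 : Finset (Finset (Fin n))) (m : ℕ)

lemma wnd_swap_eq (h1 : 1 ≤ m) (h2 : 2 * m < n) (π : ZMod n ≃ Fin n) (i s : ZMod n)
    (hs1 : s ≠ i + 1) (hs2 : s ≠ i + 1 - ((m : ℕ) : ZMod n)) :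
    Wnd ((Equiv.swap i (i + 1)).trans π) s m = Wnd π s m := by
  have hmn : m ≤ n := by omega
  ext y
  rw [mem_wnd _ _ hmn, mem_wnd _ _ hmn]
  have hsym : ((Equiv.swap i (i + 1)).trans π).symm y = Equiv.swap i (i + 1) (π.symm y) := by
    simp [Equiv.symm_trans_apply, Equiv.symm_swap]
  rw [hsym]
  set z := π.symm y with hz
  by_cases hzi : z = i
  · rw [hzi, Equiv.swap_apply_left]
    exact (nonsplit h1 h2 i s hs1 hs2).symm
  · by_cases hzi1 : z = i + 1
    · rw [hzi1, Equiv.swap_apply_right]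
      exact nonsplit h1 h2 i s hs1 hs2
    · rw [Equiv.swap_apply_of_ne_of_ne hzi hzi1]

lemma adj_invariance (h1 : 1 ≤ m) (h2 : 2 * m < n)
    (hc : ∀ τ : ZMod n ≃ Fin n, ∃ z, CenterOf 𝒢 m τ z)
    {π : ZMod n ≃ Fin n} {i : ZMod n} {x x' : Fin n}
    (hx : CenterOf 𝒢 m π x) (hx' : CenterOf 𝒢 m ((Equiv.swap i (i + 1)).trans π) x') :
    x = x' := by
  classical
  by_contra hne
  have hmn : m ≤ n := by omega
  set π' : ZMod n ≃ Fin n := (Equiv.swap i (i + 1)).trans π with hπ'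
  set p : ZMod n := π.symm x with hp
  set q : ZMod n := π.symm x' with hq
  have hpq : p ≠ q := fun h => hne (by
    have := congrArg π h
    rwa [hp, hq, Equiv.apply_symm_apply, Equiv.apply_symm_apply] at this)
  have hmm1 : ((m : ℕ) : ZMod n) = (((m - 1 : ℕ) : ℕ) : ZMod n) + 1 := by
    push_cast [Nat.cast_sub (by omega : 1 ≤ m)]; ring
  -- the common-window hypothesis
  have H : ∀ s : ZMod n, s ≠ i + 1 → s ≠ i + 1 - ((m : ℕ) : ZMod n) →
      ((p - s).val < m ↔ (q - s).val < m) := by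
    intro s hs1 hs2
    have hset : Wnd π' s m = Wnd π s m := wnd_swap_eq m h1 h2 π i s hs1 hs2
    have e1 : Wnd π s m ∈ 𝒢 ↔ x ∈ Wnd π s m := centerOf_wnd 𝒢 m hx s
    have e2 : Wnd π' s m ∈ 𝒢 ↔ x' ∈ Wnd π' s m := centerOf_wnd 𝒢 m hx' s
    rw [hset] at e2
    have e3 : x ∈ Wnd π s m ↔ x' ∈ Wnd π s m := e1.symm.trans e2
    rw [mem_wnd _ _ hmn, mem_wnd _ _ hmn, ← hp, ← hq] at e3
    exact e3
  rcases lem_arith h1 h2 p q i hpq H with ⟨hpi, hqi⟩ | ⟨hpi, hqi⟩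
  · -- case 1 : p = i, q = i + 1
    set f : ℕ → Fin n := fun j =>
      π (i - ((m : ℕ) : ZMod n) + (((if j < m then j else j + 1) : ℕ) : ZMod n)) with hf
    have hinj : ∀ a < 2 * m, ∀ b < 2 * m, f a = f b → a = b := by
      intro a ha b hb hab
      rw [hf] at hab
      have := π.injective hab
      have h3 : (((if a < m then a else a + 1) : ℕ) : ZMod n)
          = (((if b < m then b else b + 1) : ℕ) : ZMod n) := by linear_combination this
      have := cast_inj' (n := n) (by split <;> omega) (by split <;> omega) h3
      split at this <;> split at this <;> omega
    have hS : Wf f m 0 ∉ 𝒢 := by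
      have hWS : Wf f m 0 = Wnd π (i - ((m : ℕ) : ZMod n)) m := by
        refine (Finset.image_congr ?_).symm
        intro t _
        show π _ = f (0 + (t : ℕ))
        simp only [hf]
        congr 2
        rw [if_pos (by omega : 0 + (t : ℕ) < m)]
        norm_num
      rw [hWS]
      intro hmem
      have := (centerOf_wnd 𝒢 m hx (i - ((m : ℕ) : ZMod n))).1 hmem
      rw [mem_wnd _ _ hmn, ← hp, hpi] at this
      rw [show i - (i - ((m : ℕ) : ZMod n)) = ((m : ℕ) : ZMod n) by ring,
        ZMod.val_cast_of_lt (by omega)] at this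
      omega
    have hN : Wf f m m ∉ 𝒢 := by
      have hWN : Wf f m m = Wnd π (i + 1) m := by
        refine (Finset.image_congr ?_).symm
        intro t _
        show π _ = f (m + (t : ℕ))
        simp only [hf]
        rw [if_neg (by omega : ¬ m + (t : ℕ) < m)]
        congr 1
        push_cast
        ring
      rw [hWN]
      intro hmem
      have := (centerOf_wnd 𝒢 m hx (i + 1)).1 hmem
      rw [mem_wnd _ _ hmn, ← hp, hpi] at this
      have hval : (i - (i + 1)).val = n - 1 := by
        rw [show i - (i + 1) = -(((1:ℕ) : ℕ) : ZMod n) by push_cast; ring,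
          val_neg' (cast_ne_zero' (by omega) (by omega)), ZMod.val_cast_of_lt (by omega)]
      rw [hval] at this
      omega
    have hB : Wf f m 1 ∈ 𝒢 := by
      have hWB : Wf f m 1 = Wnd π' (i - ((m : ℕ) : ZMod n) + 1) m := by
        refine (Finset.image_congr ?_).symm
        intro t _
        show π' _ = f (1 + (t : ℕ))
        have hπ'app : ∀ w : ZMod n, π' w = π (Equiv.swap i (i + 1) w) := fun w => rfl
        rw [hπ'app]
        simp only [hf]
        by_cases ht : 1 + (t : ℕ) < m
        · rw [if_pos ht]
          have harg : i - ((m : ℕ) : ZMod n) + 1 + ((t : ℕ) : ZMod n)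
              = i - ((m : ℕ) : ZMod n) + (((1 + (t : ℕ) : ℕ) : ℕ) : ZMod n) := by
            push_cast; ring
          rw [harg]
          congr 1
          apply Equiv.swap_apply_of_ne_of_ne
          · intro hcon
            have : (((1 + (t : ℕ) : ℕ) : ℕ) : ZMod n) = ((m : ℕ) : ZMod n) := by
              linear_combination hcon
            have := cast_inj' (by omega) (by omega) this
            omega
          · intro hcon
            have : (((1 + (t : ℕ) : ℕ) : ℕ) : ZMod n) = (((m + 1 : ℕ) : ℕ) : ZMod n) := by
              push_cast at hcon ⊢
              linear_combination hcon
            have := cast_inj' (by omega) (by omega) this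
            omega
        · -- t = m - 1
          have ht' : (t : ℕ) = m - 1 := by have := t.isLt; omega
          rw [if_neg ht]
          have harg : i - ((m : ℕ) : ZMod n) + 1 + ((t : ℕ) : ZMod n) = i := by
            rw [ht', hmm1]
            push_cast
            ring
          rw [harg, Equiv.swap_apply_left]
          congr 1
          have : (1 + (t : ℕ) + 1 : ℕ) = m + 1 := by omega
          rw [this]
          push_cast
          ring
      rw [hWB]
      have hx'mem : x' ∈ Wnd π' (i - ((m : ℕ) : ZMod n) + 1) m := by
        rw [← hWB]
        simp only [Wf, Finset.mem_image, Finset.mem_univ, true_and]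
        refine ⟨⟨m - 1, by omega⟩, ?_⟩
        show f (1 + (m - 1)) = x'
        rw [show (1 + (m - 1) : ℕ) = m by omega]
        simp only [hf]
        rw [if_neg (by omega : ¬ m < m)]
        have : x' = π q := by rw [hq, Equiv.apply_symm_apply]
        rw [this, hqi]
        congr 1
        push_cast
        ring
      exact (centerOf_wnd 𝒢 m hx' (i - ((m : ℕ) : ZMod n) + 1)).2 hx'mem
    exact helper 𝒢 m h2 hc f hinj 1 (by omega) hS hN hB
  · -- case 2 : p = i + 1, q = i
    set f : ℕ → Fin n := fun j =>
      π (i - ((m : ℕ) : ZMod n) + 1 + (((if j < m then j else j + 1) : ℕ) : ZMod n)) with hf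
    have hinj : ∀ a < 2 * m, ∀ b < 2 * m, f a = f b → a = b := by
      intro a ha b hb hab
      rw [hf] at hab
      have := π.injective hab
      have h3 : (((if a < m then a else a + 1) : ℕ) : ZMod n)
          = (((if b < m then b else b + 1) : ℕ) : ZMod n) := by linear_combination this
      have := cast_inj' (n := n) (by split <;> omega) (by split <;> omega) h3
      split at this <;> split at this <;> omega
    have hS : Wf f m 0 ∉ 𝒢 := by
      have hWS : Wf f m 0 = Wnd π (i - ((m : ℕ) : ZMod n) + 1) m := by
        refine (Finset.image_congr ?_).symm
        intro t _
        show π _ = f (0 + (t : ℕ))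
        simp only [hf]
        congr 2
        rw [if_pos (by omega : 0 + (t : ℕ) < m)]
        norm_num
      rw [hWS]
      intro hmem
      have := (centerOf_wnd 𝒢 m hx (i - ((m : ℕ) : ZMod n) + 1)).1 hmem
      rw [mem_wnd _ _ hmn, ← hp, hpi] at this
      rw [show i + 1 - (i - ((m : ℕ) : ZMod n) + 1) = ((m : ℕ) : ZMod n) by ring,
        ZMod.val_cast_of_lt (by omega)] at this
      omega
    have hN : Wf f m m ∉ 𝒢 := by
      have hWN : Wf f m m = Wnd π (i + 2) m := by
        refine (Finset.image_congr ?_).symm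
        intro t _
        show π _ = f (m + (t : ℕ))
        simp only [hf]
        rw [if_neg (by omega : ¬ m + (t : ℕ) < m)]
        congr 1
        push_cast
        ring
      rw [hWN]
      intro hmem
      have := (centerOf_wnd 𝒢 m hx (i + 2)).1 hmem
      rw [mem_wnd _ _ hmn, ← hp, hpi] at this
      have hval : (i + 1 - (i + 2)).val = n - 1 := by
        rw [show i + 1 - (i + 2) = -(((1:ℕ) : ℕ) : ZMod n) by push_cast; ring,
          val_neg' (cast_ne_zero' (by omega) (by omega)), ZMod.val_cast_of_lt (by omega)]
      rw [hval] at this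
      omega
    have hB : Wf f m (m - 1) ∈ 𝒢 := by
      have hWB : Wf f m (m - 1) = Wnd π' (i + 1) m := by
        refine (Finset.image_congr ?_).symm
        intro t _
        show π' _ = f ((m - 1) + (t : ℕ))
        have hπ'app : ∀ w : ZMod n, π' w = π (Equiv.swap i (i + 1) w) := fun w => rfl
        rw [hπ'app]
        simp only [hf]
        by_cases ht : (t : ℕ) = 0
        · rw [ht]
          have harg : i + 1 + (((0:ℕ) : ℕ) : ZMod n) = i + 1 := by push_cast; ring
          rw [harg, Equiv.swap_apply_right]
          rw [if_pos (by omega : (m - 1) + 0 < m)]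
          congr 1
          rw [show ((m - 1) + 0 : ℕ) = m - 1 by omega, hmm1]
          ring
        · rw [if_neg (by omega : ¬ (m - 1) + (t : ℕ) < m)]
          have harg2 : ((((m - 1) + (t : ℕ) + 1 : ℕ) : ℕ) : ZMod n)
              = ((m : ℕ) : ZMod n) + ((t : ℕ) : ZMod n) - 1 + 1 := by
            rw [show ((m - 1) + (t : ℕ) + 1 : ℕ) = (m - 1) + ((t : ℕ) + 1) by omega]
            push_cast [Nat.cast_sub (by omega : 1 ≤ m)]
            ring
          rw [harg2]
          congr 1
          rw [Equiv.swap_apply_of_ne_of_ne]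
          · ring
          · intro hcon
            have : ((((t : ℕ) + 1 : ℕ) : ℕ) : ZMod n) = ((0 : ℕ) : ZMod n) := by
              push_cast at hcon ⊢
              linear_combination hcon
            have := cast_inj' (by omega) (by omega) this
            omega
          · intro hcon
            have : (((t : ℕ) : ℕ) : ZMod n) = ((0 : ℕ) : ZMod n) := by
              push_cast at hcon ⊢
              linear_combination hcon
            have := cast_inj' (by omega) (by omega) this
            omega
      rw [hWB]
      have hx'mem : x' ∈ Wnd π' (i + 1) m := by
        rw [← hWB]
        simp only [Wf, Finset.mem_image, Finset.mem_univ, true_and]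
        refine ⟨⟨0, by omega⟩, ?_⟩
        show f ((m - 1) + 0) = x'
        simp only [hf]
        rw [if_pos (by omega : (m - 1) + 0 < m)]
        have : x' = π q := by rw [hq, Equiv.apply_symm_apply]
        rw [this, hqi]
        congr 1
        rw [show ((m - 1) + 0 : ℕ) = m - 1 by omega, hmm1]
        ring
      exact (centerOf_wnd 𝒢 m hx' (i + 1)).2 hx'mem
    exact helper 𝒢 m h2 hc f hinj (m - 1) (by omega) hS hN hB

end Adj

section Group
variable {n : ℕ} [NeZero n]

lemma swap_decomp {α : Type} [DecidableEq α] (u a b : α) (hab : a ≠ b) (hua : u ≠ a)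
    (hub : u ≠ b) :
    Equiv.swap u b = (Equiv.swap a b).trans ((Equiv.swap u a).trans (Equiv.swap a b)) := by
  ext z
  simp only [Equiv.trans_apply, Equiv.swap_apply_def]
  split_ifs <;> simp_all

variable (𝒢 : Finset (Finset (Fin n))) (m : ℕ)
variable (hc : ∀ τ : ZMod n ≃ Fin n, ∃ z, CenterOf 𝒢 m τ z)

noncomputable def cen : (ZMod n ≃ Fin n) → Fin n := fun π => (hc π).choose

lemma cen_spec (π : ZMod n ≃ Fin n) : CenterOf 𝒢 m π (cen 𝒢 m hc π) := (hc π).choose_spec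

lemma cen_eq (h1 : 1 ≤ m) (h2 : 2 * m < n) {π : ZMod n ≃ Fin n} {x : Fin n} (hx : CenterOf 𝒢 m π x) :
    cen 𝒢 m hc π = x :=
  centerOf_unique 𝒢 m h1 h2 (cen_spec 𝒢 m hc π) hx

lemma cen_adj (h1 : 1 ≤ m) (h2 : 2 * m < n) (j : ZMod n) (π : ZMod n ≃ Fin n) :
    cen 𝒢 m hc ((Equiv.swap j (j + 1)).trans π) = cen 𝒢 m hc π := by
  exact (adj_invariance 𝒢 m h1 h2 hc (cen_spec 𝒢 m hc π)
    (cen_spec 𝒢 m hc ((Equiv.swap j (j + 1)).trans π))).symm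

lemma cen_swapd (h1 : 1 ≤ m) (h2 : 2 * m < n) : ∀ (d : ℕ) (u : ZMod n) (π : ZMod n ≃ Fin n),
    cen 𝒢 m hc ((Equiv.swap u (u + ((d : ℕ) : ZMod n))).trans π) = cen 𝒢 m hc π := by
  intro d
  induction d with
  | zero =>
    intro u π
    rw [show (((0 : ℕ) : ℕ) : ZMod n) = 0 by push_cast; ring, add_zero, Equiv.swap_self]
    rfl
  | succ d ih =>
    intro u π
    by_cases hz1 : (((d + 1 : ℕ) : ℕ) : ZMod n) = 0
    · rw [hz1, add_zero, Equiv.swap_self]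
      rfl
    · by_cases hz0 : (((d : ℕ) : ℕ) : ZMod n) = 0
      · have harg : u + (((d + 1 : ℕ) : ℕ) : ZMod n) = u + 1 := by
          push_cast
          rw [show ((d : ℕ) : ZMod n) = 0 from hz0]
          ring
        rw [harg]
        exact cen_adj 𝒢 m hc h1 h2 u π
      · set a : ZMod n := u + ((d : ℕ) : ZMod n) with ha
        have hua : u ≠ a := by
          intro h
          exact hz0 (by linear_combination -h)
        have hub : u ≠ u + (((d + 1 : ℕ) : ℕ) : ZMod n) := by
          intro h
          exact hz1 (by linear_combination -h)
        have hone : (1 : ZMod n) ≠ 0 := by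
          have := cast_ne_zero' (n := n) (by omega) (by omega : 1 < n)
          rwa [Nat.cast_one] at this
        have hb_eq : u + (((d + 1 : ℕ) : ℕ) : ZMod n) = a + 1 := by
          rw [ha]; push_cast; ring
        have hab : a ≠ a + 1 := by
          intro h
          exact hone (by linear_combination -h)
        rw [hb_eq] at hub ⊢
        rw [swap_decomp u a (a + 1) hab hua hub, Equiv.trans_assoc, Equiv.trans_assoc]
        rw [cen_adj 𝒢 m hc h1 h2 a]
        rw [ih u]
        exact cen_adj 𝒢 m hc h1 h2 a π

lemma cen_swap (h1 : 1 ≤ m) (h2 : 2 * m < n) (u v : ZMod n) (π : ZMod n ≃ Fin n) :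
    cen 𝒢 m hc ((Equiv.swap u v).trans π) = cen 𝒢 m hc π := by
  have : v = u + (((v - u).val : ℕ) : ZMod n) := by
    rw [ZMod.natCast_rightInverse (v - u)]
    ring
  rw [show Equiv.swap u v = Equiv.swap u (u + (((v - u).val : ℕ) : ZMod n)) by rw [← this]]
  exact cen_swapd 𝒢 m hc h1 h2 _ u π

lemma cen_perm (h1 : 1 ≤ m) (h2 : 2 * m < n) : ∀ (ρ : Equiv.Perm (ZMod n)) (π : ZMod n ≃ Fin n),
    cen 𝒢 m hc ((ρ : ZMod n ≃ ZMod n).trans π) = cen 𝒢 m hc π := by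
  intro ρ
  refine Equiv.Perm.swap_induction_on ρ ?_ ?_
  · intro π
    rw [show ((1 : Equiv.Perm (ZMod n)) : ZMod n ≃ ZMod n) = Equiv.refl (ZMod n) from rfl]
    rw [Equiv.refl_trans]
  · intro f x y hxy ih π
    rw [show ((Equiv.swap x y * f : Equiv.Perm (ZMod n)) : ZMod n ≃ ZMod n)
        = f.trans (Equiv.swap x y) from rfl]
    rw [Equiv.trans_assoc, ih, cen_swap 𝒢 m hc h1 h2]

lemma cen_const (h1 : 1 ≤ m) (h2 : 2 * m < n) (π π' : ZMod n ≃ Fin n) : cen 𝒢 m hc π = cen 𝒢 m hc π' := by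
  have hdecomp : (π.trans π'.symm).trans π' = π := by
    rw [Equiv.trans_assoc, Equiv.symm_trans_self, Equiv.trans_refl]
  calc cen 𝒢 m hc π = cen 𝒢 m hc ((π.trans π'.symm).trans π') := by rw [hdecomp]
    _ = cen 𝒢 m hc π' := cen_perm 𝒢 m hc h1 h2 (π.trans π'.symm) π'

end Group

section Final
variable {n : ℕ} [NeZero n]

lemma exists_wnd {m' : ℕ} (hm' : m' ≤ n) (S : Finset (Fin n)) (hS : S.card = m') :
    ∃ σ : ZMod n ≃ Fin n, S = Wnd σ (((0 : ℕ) : ZMod n)) m' := by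
  classical
  have hnpos : 0 < n := Nat.pos_of_ne_zero (NeZero.ne n)
  set e := S.orderIsoOfFin hS with he
  set f : ℕ → Fin n := fun j => if h : j < m' then (e ⟨j, h⟩ : Fin n) else ⟨0, hnpos⟩ with hf
  have hinj : ∀ a < m', ∀ b < m', f a = f b → a = b := by
    intro a ha b hb hab
    rw [hf] at hab
    simp only [dif_pos ha, dif_pos hb] at hab
    have h5 : (⟨a, ha⟩ : Fin m') = ⟨b, hb⟩ := e.injective (Subtype.ext hab)
    exact congrArg Fin.val h5
  obtain ⟨σ, hσ⟩ := ext_perm f m' hm' hinj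
  refine ⟨σ, ?_⟩
  have hW : Wnd σ (((0 : ℕ) : ZMod n)) m' = Wf f m' 0 := wnd_ext_perm hσ (by omega)
  rw [hW]
  ext y
  simp only [Wf, Finset.mem_image, Finset.mem_univ, true_and]
  constructor
  · intro hy
    obtain ⟨t, ht⟩ := e.surjective ⟨y, hy⟩
    refine ⟨t, ?_⟩
    show f (0 + (t : ℕ)) = y
    rw [hf]
    simp only [Nat.zero_add, dif_pos t.isLt]
    rw [show (⟨(t : ℕ), t.isLt⟩ : Fin m') = t from rfl, ht]
  · rintro ⟨t, rfl⟩
    show f (0 + (t : ℕ)) ∈ S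
    rw [hf]
    simp only [Nat.zero_add, dif_pos t.isLt]
    exact Finset.coe_mem _
end Final

/-- let `k ≥ l ≥ 1`, `n > k + l`, and let `𝒜 ⊆ ([n] choose k)`,
`ℬ ⊆ ([n] choose l)` be cross-intersecting.  If for every cyclic permutation `π` of `[n]`
there is an element `x` such that the members of `𝒜` that are intervals of `π` are exactly
all the `k`-intervals of `π` containing `x`, and likewise for `ℬ` with `l`-intervals, then
`𝒜` and `ℬ` are the stars of all `k`-subsets and `l`-subsets containing a common fixed
element `y`. -/
theorem stmt16 (n k l : ℕ) (hl : 1 ≤ l) (hkl : l ≤ k) (hn : k + l < n)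
    (𝒜 ℬ : Finset (Finset (Fin n)))
    (hA : ∀ A ∈ 𝒜, A.card = k) (hB : ∀ B ∈ ℬ, B.card = l)
    (hcross : ∀ A ∈ 𝒜, ∀ B ∈ ℬ, (A ∩ B).Nonempty)
    (hcenter : ∀ π : ZMod n ≃ Fin n, ∃ x : Fin n,
      (∀ I : Finset (Fin n), (∃ i, IsIntervalFrom n π i k I) → (I ∈ 𝒜 ↔ x ∈ I)) ∧
      (∀ I : Finset (Fin n), (∃ i, IsIntervalFrom n π i l I) → (I ∈ ℬ ↔ x ∈ I))) :
    ∃ y : Fin n,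
      𝒜 = (Finset.univ.powersetCard k).filter (fun S => y ∈ S) ∧
      ℬ = (Finset.univ.powersetCard l).filter (fun S => y ∈ S) := by
  haveI : NeZero n := ⟨by omega⟩
  have h1 : 1 ≤ l := hl
  have h2 : 2 * l < n := by omega
  have hkn : k ≤ n := by omega
  have hln : l ≤ n := by omega
  have hcB : ∀ τ : ZMod n ≃ Fin n, ∃ z, CenterOf ℬ l τ z :=
    fun τ => ⟨(hcenter τ).choose, (hcenter τ).choose_spec.2⟩
  set y : Fin n := cen ℬ l hcB zmodFin with hy
  have hkey : ∀ π : ZMod n ≃ Fin n,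
      (∀ I, (∃ i, IsIntervalFrom n π i k I) → (I ∈ 𝒜 ↔ y ∈ I)) ∧
      (∀ I, (∃ i, IsIntervalFrom n π i l I) → (I ∈ ℬ ↔ y ∈ I)) := by
    intro π
    obtain ⟨x, hxA, hxB⟩ := hcenter π
    have hxc : CenterOf ℬ l π x := hxB
    have hc1 : cen ℬ l hcB π = x := cen_eq ℬ l hcB h1 h2 hxc
    have hxy : x = y := by
      rw [← hc1, hy]
      exact cen_const ℬ l hcB h1 h2 π zmodFin
    rw [← hxy]
    exact ⟨hxA, hxB⟩
  refine ⟨y, ?_, ?_⟩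
  · ext S
    rw [Finset.mem_filter, Finset.mem_powersetCard_univ]
    constructor
    · intro hS
      have hcard : S.card = k := hA S hS
      obtain ⟨σ, hσ⟩ := exists_wnd hkn S hcard
      have hiff := (hkey σ).1 S ⟨(((0 : ℕ) : ZMod n)), hσ⟩
      exact ⟨hcard, hiff.1 hS⟩
    · rintro ⟨hcard, hyS⟩
      obtain ⟨σ, hσ⟩ := exists_wnd hkn S hcard
      have hiff := (hkey σ).1 S ⟨(((0 : ℕ) : ZMod n)), hσ⟩
      exact hiff.2 hyS
  · ext S
    rw [Finset.mem_filter, Finset.mem_powersetCard_univ]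
    constructor
    · intro hS
      have hcard : S.card = l := hB S hS
      obtain ⟨σ, hσ⟩ := exists_wnd hln S hcard
      have hiff := (hkey σ).2 S ⟨(((0 : ℕ) : ZMod n)), hσ⟩
      exact ⟨hcard, hiff.1 hS⟩
    · rintro ⟨hcard, hyS⟩
      obtain ⟨σ, hσ⟩ := exists_wnd hln S hcard
      have hiff := (hkey σ).2 S ⟨(((0 : ℕ) : ZMod n)), hσ⟩
      exact hiff.2 hyS
end
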